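/- arXiv:1704.06949 — 4 statements merged into one kernel-verified Lean document; each statement's English description precedes it below -/
import Mathlib

section
/- Let V be an n-dimensional real vector space with coordinates x_1,…,x_n and U ⊆ V open. For the monodromy map N : A^{p,q}(U) → A^{p-1,q+1}(U) on superforms (defined via coevaluation, contraction, and wedge), one has N ∘ d'' = d'' ∘ N as maps A^{p,q}(U) → A^{p-1,q+2}(U) for every p ≥ 1 and q ≥ 0. -/
open scoped BigOperators

section Aux

lemma succAbove_val' {m : ℕ} (p : Fin (m+1)) (i : Fin m) :
    ((p.succAbove i : Fin (m+1)) : ℕ) = if (i:ℕ) < (p:ℕ) then (i:ℕ) else (i:ℕ)+1 := by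
  rw [Fin.succAbove]; split_ifs with h1 h2 h2 <;> simp_all [Fin.lt_def]

/-- The partner index in the involution `(k, l) ↦ (k.succAbove l, partner k l)`. -/
def partnerIdx {q : ℕ} (k : Fin (q+2)) (l : Fin (q+1)) : Fin (q+1) :=
  if _ : (l:ℕ) < (k:ℕ) then ⟨(k:ℕ)-1, by have := k.isLt; omega⟩
  else ⟨(k:ℕ), by have := l.isLt; omega⟩

lemma partnerIdx_val {q : ℕ} (k : Fin (q+2)) (l : Fin (q+1)) :
    ((partnerIdx k l : Fin (q+1)) : ℕ) = if (l:ℕ) < (k:ℕ) then (k:ℕ)-1 else (k:ℕ) := by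
  rw [partnerIdx]; split_ifs <;> rfl

lemma key1 {q : ℕ} (k : Fin (q+2)) (l : Fin (q+1)) :
    (k.succAbove l).succAbove (partnerIdx k l) = k := by
  have hk := k.isLt; have hl := l.isLt
  apply Fin.ext
  rw [succAbove_val', partnerIdx_val, succAbove_val']
  split_ifs <;> omega

lemma key2 {q : ℕ} (k : Fin (q+2)) (l : Fin (q+1)) (m : Fin q) :
    (k.succAbove l).succAbove ((partnerIdx k l).succAbove m) = k.succAbove (l.succAbove m) := by
  have hk := k.isLt; have hl := l.isLt; have hm := m.isLt
  apply Fin.ext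
  rw [succAbove_val', succAbove_val', succAbove_val', succAbove_val', partnerIdx_val,
    succAbove_val']
  split_ifs <;> omega

lemma key3 {q : ℕ} (k : Fin (q+2)) (l : Fin (q+1)) :
    partnerIdx (k.succAbove l) (partnerIdx k l) = l := by
  have hk := k.isLt; have hl := l.isLt
  apply Fin.ext
  rw [partnerIdx_val, partnerIdx_val, succAbove_val']
  split_ifs <;> omega

lemma key4 {q : ℕ} (k : Fin (q+2)) (l : Fin (q+1)) :
    Odd ((k:ℕ) + (l:ℕ) + ((k.succAbove l : Fin (q+2)):ℕ) + ((partnerIdx k l : Fin (q+1)):ℕ)) := by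
  have hk := k.isLt; have hl := l.isLt
  rw [succAbove_val', partnerIdx_val, Nat.odd_iff]
  split_ifs <;> omega

lemma neg_one_pow_mod (m : ℕ) : (-1 : ℝ)^m = if m % 2 = 0 then 1 else -1 := by
  rcases Nat.even_or_odd m with h | h
  · rw [if_pos (Nat.even_iff.mp h), h.neg_one_pow]
  · rw [if_neg (by rw [Nat.odd_iff] at h; omega), h.neg_one_pow]

lemma key5 {q : ℕ} (k : Fin (q+2)) (l : Fin (q+1)) :
    (-1:ℝ)^(((k.succAbove l : Fin (q+2))):ℕ) * (-1)^((partnerIdx k l : Fin (q+1)):ℕ)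
      = -((-1)^(k:ℕ) * (-1)^(l:ℕ)) := by
  have h := key4 k l
  rw [Nat.odd_iff] at h
  rw [neg_one_pow_mod, neg_one_pow_mod, neg_one_pow_mod, neg_one_pow_mod]
  split_ifs <;> (try norm_num) <;> omega

lemma sum_reindex {q : ℕ} (g h : Fin (q+2) → Fin (q+1) → ℝ)
    (hgh : ∀ k l, g (k.succAbove l) (partnerIdx k l) = h k l) :
    ∑ k, ∑ l, g k l = ∑ k, ∑ l, h k l := by
  have hinv : Function.Involutive
      (fun z : Fin (q+2) × Fin (q+1) => (z.1.succAbove z.2, partnerIdx z.1 z.2)) := by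
    intro z; simp only [key1, key3]
  calc ∑ k, ∑ l, g k l = ∑ z : Fin (q+2) × Fin (q+1), g z.1 z.2 :=
        (Fintype.sum_prod_type (fun z : Fin (q+2) × Fin (q+1) => g z.1 z.2)).symm
    _ = ∑ z : Fin (q+2) × Fin (q+1), g (z.1.succAbove z.2) (partnerIdx z.1 z.2) := by
        rw [← Equiv.sum_comp hinv.toPerm (fun z : Fin (q+2) × Fin (q+1) => g z.1 z.2)]
        simp only [Function.Involutive.coe_toPerm]
    _ = ∑ z : Fin (q+2) × Fin (q+1), h z.1 z.2 :=
        Fintype.sum_congr _ _ fun z => hgh z.1 z.2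
    _ = ∑ k, ∑ l, h k l :=
        Fintype.sum_prod_type (fun z : Fin (q+2) × Fin (q+1) => h z.1 z.2)

end Aux

/-- A `(p,q)`-superform on (an open subset of) `ℝ^n`, given by its coefficient functions
`ω_{I,J}` indexed by multi-indices `I : Fin p → Fin n` and `J : Fin q → Fin n`. -/
def Superform (n p q : ℕ) : Type :=
  (Fin p → Fin n) → (Fin q → Fin n) → (Fin n → ℝ) → ℝ

/-- The coefficients of a superform are alternating in each group of indices. -/
def Superform.IsAlt {n p q : ℕ} (ω : Superform n p q) : Prop :=
  (∀ (a : Fin p → Fin n) (b : Fin q → Fin n) (σ : Equiv.Perm (Fin p))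
      (τ : Equiv.Perm (Fin q)) (x : Fin n → ℝ),
    ω (a ∘ σ) (b ∘ τ) x = ((Equiv.Perm.sign σ : ℤ) : ℝ) * ((Equiv.Perm.sign τ : ℤ) : ℝ) * ω a b x) ∧
  (∀ (a : Fin p → Fin n) (b : Fin q → Fin n) (x : Fin n → ℝ),
    (¬ Function.Injective a ∨ ¬ Function.Injective b) → ω a b x = 0)

/-- Smoothness of the coefficients of a superform on a set `U`. -/
def Superform.SmoothOn {n p q : ℕ} (ω : Superform n p q) (U : Set (Fin n → ℝ)) : Prop :=
  ∀ (a : Fin p → Fin n) (b : Fin q → Fin n), ContDiffOn ℝ (⊤ : ℕ∞) (fun x => ω a b x) U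

/-- The differential `d'` on superforms, in coordinates. -/
noncomputable def superD' {n p q : ℕ} (ω : Superform n p q) : Superform n (p + 1) q :=
  fun a b x => ∑ k : Fin (p + 1),
    (-1 : ℝ) ^ (k : ℕ) * fderiv ℝ (fun y => ω (a ∘ k.succAbove) b y) x (Pi.single (a k) 1)

/-- The differential `d''` on superforms, in coordinates. -/
noncomputable def superD'' {n p q : ℕ} (ω : Superform n p q) : Superform n p (q + 1) :=
  fun a b x => (-1 : ℝ) ^ p * ∑ k : Fin (q + 1),
    (-1 : ℝ) ^ (k : ℕ) * fderiv ℝ (fun y => ω a (b ∘ k.succAbove) y) x (Pi.single (b k) 1)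

/-- The flip map `J` on superforms: `J(ω d'x_I ∧ d''x_J) = (-1)^{pq} ω d'x_J ∧ d''x_I`. -/
def superJ {n p q : ℕ} (ω : Superform n p q) : Superform n q p :=
  fun a b x => (-1 : ℝ) ^ (p * q) * ω b a x

/-- The monodromy map `N` on superforms, sending `ω d'x_I ∧ d''x_J` to
`∑_k (-1)^{p-k} ω d'x_{I∖{i_k}} ∧ d''x_{i_k} ∧ d''x_J`, in coefficient form. -/
def superN {n p q : ℕ} (ω : Superform n (p + 1) q) : Superform n p (q + 1) :=
  fun a b x => ∑ k : Fin (q + 1),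
    (-1 : ℝ) ^ (k : ℕ) * ω (Fin.snoc a (b k)) (b ∘ k.succAbove) x

/-- The wedge product of superforms, in coefficient form (with the Koszul sign `(-1)^{p' q}`
coming from moving `d'x_{I'}` past `d''x_J`). -/
noncomputable def superWedge {n p q p' q' : ℕ} (ω : Superform n p q) (ω' : Superform n p' q') :
    Superform n (p + p') (q + q') :=
  fun c d x =>
    ((-1 : ℝ) ^ (p' * q) /
        ((p.factorial * p'.factorial * q.factorial * q'.factorial : ℕ) : ℝ)) *
      ∑ σ : Equiv.Perm (Fin (p + p')), ∑ τ : Equiv.Perm (Fin (q + q')),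
        ((Equiv.Perm.sign σ : ℤ) : ℝ) * ((Equiv.Perm.sign τ : ℤ) : ℝ) *
          ω (fun i => c (σ (Fin.castAdd p' i))) (fun j => d (τ (Fin.castAdd q' j))) x *
          ω' (fun i => c (σ (Fin.natAdd p i))) (fun j => d (τ (Fin.natAdd q j))) x

/-- The monodromy map commutes with `d''`: `N ∘ d'' = d'' ∘ N` as maps
`A^{p,q}(U) → A^{p-1,q+2}(U)`, for `p ≥ 1` and `q ≥ 0`. -/
theorem superN_comm_superD'' (n p q : ℕ) (U : Set (Fin n → ℝ)) (hU : IsOpen U)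
    (ω : Superform n (p + 1) q) (halt : ω.IsAlt) (hsm : ω.SmoothOn U) :
    ∀ (a : Fin p → Fin n) (b : Fin (q + 2) → Fin n), ∀ x ∈ U,
      superN (superD'' ω) a b x = superD'' (superN ω) a b x := by
  intro a b x hx
  have hdiff : ∀ (a' : Fin (p+1) → Fin n) (b' : Fin q → Fin n),
      DifferentiableAt ℝ (fun y => ω a' b' y) x := fun a' b' =>
    ((hsm a' b').contDiffAt (hU.mem_nhds hx)).differentiableAt (by simp)
  set T : Fin (q+2) → Fin (q+1) → ℝ := fun k l =>
    fderiv ℝ (fun y => ω (Fin.snoc a (b k)) (fun m => b (k.succAbove (l.succAbove m))) y) x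
      (Pi.single (b (k.succAbove l)) 1) with hTdef
  set S : Fin (q+2) → Fin (q+1) → ℝ := fun k l =>
    fderiv ℝ (fun y => ω (Fin.snoc a (b (k.succAbove l)))
        (fun m => b (k.succAbove (l.succAbove m))) y) x
      (Pi.single (b k) 1) with hSdef
  have hL : superN (superD'' ω) a b x
      = ∑ k : Fin (q+2), (-1:ℝ)^(k:ℕ) *
          ((-1:ℝ)^(p+1) * ∑ l : Fin (q+1), (-1:ℝ)^(l:ℕ) * T k l) := by
    simp only [superN, superD'', Function.comp_def, hTdef]
  have hR : superD'' (superN ω) a b x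
      = (-1:ℝ)^p * ∑ k : Fin (q+2), (-1:ℝ)^(k:ℕ) *
          ∑ l : Fin (q+1), (-1:ℝ)^(l:ℕ) * S k l := by
    simp only [superD'', superN, Function.comp_def, hSdef]
    refine congrArg _ (Finset.sum_congr rfl fun k _ => ?_)
    congr 1
    rw [fderiv_fun_sum fun l _ => (hdiff _ _).const_mul _, ContinuousLinearMap.sum_apply]
    exact Finset.sum_congr rfl fun l _ => by
      rw [fderiv_const_mul (hdiff _ _), ContinuousLinearMap.smul_apply, smul_eq_mul]
  have main : (∑ k : Fin (q+2), ∑ l : Fin (q+1), (-1:ℝ)^(k:ℕ) * ((-1:ℝ)^(l:ℕ) * S k l))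
      = ∑ k : Fin (q+2), ∑ l : Fin (q+1), -((-1:ℝ)^(k:ℕ) * ((-1:ℝ)^(l:ℕ) * T k l)) := by
    refine sum_reindex _ _ fun k l => ?_
    have hST : S (k.succAbove l) (partnerIdx k l) = T k l := by
      simp only [hSdef, hTdef]
      rw [key1 k l, show (fun m => b ((k.succAbove l).succAbove ((partnerIdx k l).succAbove m)))
          = (fun m => b (k.succAbove (l.succAbove m)))
        from funext fun m => congrArg b (key2 k l m)]
    rw [hST, ← mul_assoc, key5]
    ring
  rw [hL, hR]
  calc (∑ k : Fin (q+2), (-1:ℝ)^(k:ℕ) *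
          ((-1:ℝ)^(p+1) * ∑ l : Fin (q+1), (-1:ℝ)^(l:ℕ) * T k l))
      = (-1:ℝ)^p * ∑ k : Fin (q+2), ∑ l : Fin (q+1),
          -((-1:ℝ)^(k:ℕ) * ((-1:ℝ)^(l:ℕ) * T k l)) := by
        rw [Finset.mul_sum]
        refine Finset.sum_congr rfl fun k _ => ?_
        simp only [Finset.sum_neg_distrib, ← Finset.mul_sum]
        ring
    _ = (-1:ℝ)^p * ∑ k : Fin (q+2), ∑ l : Fin (q+1),
          (-1:ℝ)^(k:ℕ) * ((-1:ℝ)^(l:ℕ) * S k l) := by rw [← main]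
    _ = (-1:ℝ)^p * ∑ k : Fin (q+2), (-1:ℝ)^(k:ℕ) *
          ∑ l : Fin (q+1), (-1:ℝ)^(l:ℕ) * S k l := by
        simp only [Finset.mul_sum]
end

section
/- The p-fold iterate of the monodromy map on superforms satisfies N^p = p! · J as maps A^{p,0}(U) → A^{0,p}(U), where J is the flip map sending ω(x) d'x_I (with |I| = p) to ω(x) d''x_I. -/
open scoped BigOperators

/-- The iterated monodromy map `N^r : A^{p,q} → A^{p-r,q+r}`; here the full iteration
`N^p : A^{p,q} → A^{0,q+p}`. -/
noncomputable def superNiter {n : ℕ} : (p : ℕ) → {q : ℕ} → Superform n p q → Superform n 0 (q + p)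
  | 0, _, ω => ω
  | p + 1, q, ω =>
      cast (congrArg (fun k => Superform n 0 k) (Nat.succ_add q p))
        (superNiter p (superN ω))

section Aux

open Equiv Equiv.Perm

variable {n : ℕ}

private lemma fin_append_apply_lt {p q : ℕ} {α : Type*} (u : Fin p → α) (v : Fin q → α)
    (i : Fin (p + q)) (h : (i : ℕ) < p) : Fin.append u v i = u ⟨i, h⟩ := by
  have h1 : Fin.append u v i = Fin.append u v (Fin.castAdd q ⟨(i : ℕ), h⟩) :=
    congrArg _ (by ext; rfl)
  rw [h1, Fin.append_left]

private lemma fin_append_apply_ge {p q : ℕ} {α : Type*} (u : Fin p → α) (v : Fin q → α)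
    (i : Fin (p + q)) (h : p ≤ (i : ℕ)) :
    Fin.append u v i = v ⟨(i : ℕ) - p, by omega⟩ := by
  have h1 : Fin.append u v i
      = Fin.append u v (Fin.natAdd p ⟨(i : ℕ) - p, by have := i.isLt; omega⟩) :=
    congrArg _ (by ext; simp; omega)
  rw [h1, Fin.append_right]

private lemma fin_snoc_apply_lt {p : ℕ} {α : Type*} (u : Fin p → α) (y : α)
    (i : Fin (p + 1)) (h : (i : ℕ) < p) :
    Fin.snoc (α := fun _ => α) u y i = u ⟨i, h⟩ := by
  have h1 : Fin.snoc (α := fun _ => α) u y i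
      = Fin.snoc (α := fun _ => α) u y (Fin.castSucc ⟨(i : ℕ), h⟩) :=
    congrArg _ (by ext; rfl)
  rw [h1, Fin.snoc_castSucc]

private lemma fin_snoc_apply_last {p : ℕ} {α : Type*} (u : Fin p → α) (y : α)
    (i : Fin (p + 1)) (h : (i : ℕ) = p) : Fin.snoc (α := fun _ => α) u y i = y := by
  have h1 : Fin.snoc (α := fun _ => α) u y i = Fin.snoc (α := fun _ => α) u y (Fin.last p) :=
    congrArg _ (by ext; exact h)
  rw [h1, Fin.snoc_last]

/-- Evaluating a `cast` of a superform. -/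
private lemma superform_cast_apply {k₁ k₂ : ℕ} (e : k₁ = k₂) (f : Superform n 0 k₁)
    (a : Fin 0 → Fin n) (b : Fin k₂ → Fin n) (x : Fin n → ℝ) :
    cast (congrArg (fun k => Superform n 0 k) e) f a b x = f a (b ∘ Fin.cast e) x := by
  subst e; rfl

/-- Sign invariance is preserved under recasting the index size. -/
private lemma sign_transport {m m' : ℕ} (e : m = m')
    (Ω : (Fin m → Fin n) → (Fin n → ℝ) → ℝ)
    (hs : ∀ (c : Fin m → Fin n) (σ : Equiv.Perm (Fin m)) (x : Fin n → ℝ),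
      Ω (c ∘ σ) x = ((Equiv.Perm.sign σ : ℤ) : ℝ) * Ω c x)
    (c : Fin m' → Fin n) (σ : Equiv.Perm (Fin m')) (x : Fin n → ℝ) :
    Ω ((c ∘ σ) ∘ Fin.cast e) x = ((Equiv.Perm.sign σ : ℤ) : ℝ) * Ω (c ∘ Fin.cast e) x := by
  subst e
  exact hs c σ x

/-- One application of the monodromy operator, on forms pulled back from an
alternating top form `Ω`. -/
private lemma superN_apply_eq {p q : ℕ} (ω : Superform n (p + 1) q)
    (Ω : (Fin (p + 1 + q) → Fin n) → (Fin n → ℝ) → ℝ)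
    (hs : ∀ (c : Fin (p + 1 + q) → Fin n) (σ : Equiv.Perm (Fin (p + 1 + q))) (x : Fin n → ℝ),
      Ω (c ∘ σ) x = ((Equiv.Perm.sign σ : ℤ) : ℝ) * Ω c x)
    (hω : ∀ a b x, ω a b x = Ω (Fin.append a b) x)
    (a : Fin p → Fin n) (b : Fin (q + 1) → Fin n) (x : Fin n → ℝ) :
    superN ω a b x
      = ((q : ℝ) + 1) * Ω (Fin.append a b ∘ Fin.cast (by omega : p + 1 + q = p + (q + 1))) x := by
  have e : p + 1 + q = p + (q + 1) := by omega
  set E : (Fin p ⊕ Fin (q + 1)) ≃ Fin (p + 1 + q) :=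
    finSumFinEquiv.trans (finCongr e.symm) with hE
  have key : ∀ k : Fin (q + 1),
      Fin.append (Fin.snoc a (b k)) (b ∘ k.succAbove)
        = (Fin.append a b ∘ Fin.cast e) ∘
            (E.permCongr (Equiv.Perm.sumCongr (1 : Equiv.Perm (Fin p)) k.cycleRange.symm)) := by
    intro k
    funext i
    obtain ⟨z, rfl⟩ : ∃ z, E z = i := ⟨E.symm i, E.apply_symm_apply i⟩
    have hRHS : ∀ z' : Fin p ⊕ Fin (q + 1),
        (Fin.append a b) (Fin.cast e (E z')) = Sum.elim a b z' := by
      intro z'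
      have : Fin.cast e (E z') = finSumFinEquiv z' := by
        ext; simp [hE]
      rw [this]
      cases z' with
      | inl j => simp [finSumFinEquiv_apply_left, Fin.append_left]
      | inr j => simp [finSumFinEquiv_apply_right, Fin.append_right]
    have hperm : ∀ z' : Fin p ⊕ Fin (q + 1),
        (E.permCongr (Equiv.Perm.sumCongr (1 : Equiv.Perm (Fin p)) k.cycleRange.symm)) (E z')
          = E (Sum.map id (k.cycleRange.symm) z') := by
      intro z'
      simp [Equiv.permCongr_apply, Equiv.Perm.sumCongr_apply]
    rw [Function.comp_apply, Function.comp_apply, hperm, hRHS]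
    have hvalE : ∀ z' : Fin p ⊕ Fin (q + 1),
        ((E z' : Fin (p + 1 + q)) : ℕ) = Sum.elim (fun j : Fin p => (j : ℕ))
          (fun t : Fin (q + 1) => p + (t : ℕ)) z' := by
      intro z'
      cases z' with
      | inl j => simp [hE]
      | inr j => simp [hE]
    cases z with
    | inl j =>
        have hv : ((E (Sum.inl j) : Fin (p + 1 + q)) : ℕ) = (j : ℕ) := hvalE (Sum.inl j)
        have h1 : ((E (Sum.inl j) : Fin (p + 1 + q)) : ℕ) < p + 1 := by
          rw [hv]; have := j.isLt; omega
        rw [fin_append_apply_lt _ _ _ h1]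
        rw [fin_snoc_apply_lt a (b k) ⟨_, h1⟩
          (show ((E (Sum.inl j) : Fin (p + 1 + q)) : ℕ) < p by rw [hv]; exact j.isLt)]
        simp only [Sum.map_inl, Sum.elim_inl, id_eq]
        exact congrArg a (Fin.ext hv)
    | inr t =>
        cases t using Fin.cases with
        | zero =>
            have hv : ((E (Sum.inr (0 : Fin (q + 1))) : Fin (p + 1 + q)) : ℕ) = p + 0 :=
              hvalE (Sum.inr 0)
            have h1 : ((E (Sum.inr (0 : Fin (q + 1))) : Fin (p + 1 + q)) : ℕ) < p + 1 := by
              rw [hv]; omega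
            rw [fin_append_apply_lt _ _ _ h1]
            rw [fin_snoc_apply_last a (b k) ⟨_, h1⟩
              (show ((E (Sum.inr (0 : Fin (q + 1))) : Fin (p + 1 + q)) : ℕ) = p by
                rw [hv]; omega)]
            have hc : k.cycleRange.symm 0 = k :=
              k.cycleRange.symm_apply_eq.mpr (Fin.cycleRange_self k).symm
            simp [hc]
        | succ s =>
            have hv : ((E (Sum.inr s.succ) : Fin (p + 1 + q)) : ℕ) = p + ((s : ℕ) + 1) :=
              hvalE (Sum.inr s.succ)
            have h1 : p + 1 ≤ ((E (Sum.inr s.succ) : Fin (p + 1 + q)) : ℕ) := by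
              rw [hv]; omega
            rw [fin_append_apply_ge _ _ _ h1]
            have hc : k.cycleRange.symm s.succ = k.succAbove s :=
              k.cycleRange.symm_apply_eq.mpr (Fin.cycleRange_succAbove k s).symm
            simp only [Sum.map_inr, Sum.elim_inr, hc, Function.comp_apply]
            exact congrArg b (congrArg k.succAbove (Fin.ext (by
              show ((E (Sum.inr s.succ) : Fin (p + 1 + q)) : ℕ) - (p + 1) = (s : ℕ)
              rw [hv]; omega)))
  have hsign : ∀ k : Fin (q + 1),
      ((Equiv.Perm.sign
        (E.permCongr (Equiv.Perm.sumCongr (1 : Equiv.Perm (Fin p)) k.cycleRange.symm)) : ℤ) : ℝ)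
        = (-1 : ℝ) ^ (k : ℕ) := by
    intro k
    have : (k.cycleRange.symm : Equiv.Perm (Fin (q + 1))) = k.cycleRange⁻¹ := rfl
    rw [Equiv.Perm.sign_permCongr, Equiv.Perm.sign_sumCongr, this, Equiv.Perm.sign_inv,
      Fin.sign_cycleRange]
    simp
  calc superN ω a b x
      = ∑ k : Fin (q + 1), Ω (Fin.append a b ∘ Fin.cast e) x := by
        apply Finset.sum_congr rfl
        intro k _
        rw [hω, key k, hs, hsign]
        rw [← mul_assoc, ← mul_pow]
        norm_num
    _ = ((q : ℝ) + 1) * Ω (Fin.append a b ∘ Fin.cast e) x := by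
        rw [Finset.sum_const, Finset.card_univ, Fintype.card_fin, nsmul_eq_mul]
        push_cast
        ring

/-- The main induction: the full iterate of `N` on a form pulled back from a
sign-alternating `Ω`. -/
private lemma superNiter_apply_eq :
    ∀ (p : ℕ) {q : ℕ} (ω : Superform n p q)
      (Ω : (Fin (p + q) → Fin n) → (Fin n → ℝ) → ℝ),
      (∀ (c : Fin (p + q) → Fin n) (σ : Equiv.Perm (Fin (p + q))) (x : Fin n → ℝ),
        Ω (c ∘ σ) x = ((Equiv.Perm.sign σ : ℤ) : ℝ) * Ω c x) →
      (∀ a b x, ω a b x = Ω (Fin.append a b) x) →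
      ∀ (a : Fin 0 → Fin n) (b : Fin (q + p) → Fin n) (x : Fin n → ℝ),
      superNiter p ω a b x
        = ((∏ j ∈ Finset.range p, (q + j + 1) : ℕ) : ℝ)
            * Ω (b ∘ Fin.cast (Nat.add_comm p q)) x
  | 0, q, ω, Ω, hs, hω, a, b, x => by
      have : superNiter 0 ω a b x = ω a b x := rfl
      rw [this, hω]
      have : Fin.append a b = b ∘ Fin.cast (Nat.add_comm 0 q) := by
        funext i
        rw [fin_append_apply_ge _ _ _ (Nat.zero_le _)]
        exact congrArg b (Fin.ext (by simp))
      rw [this]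
      simp
  | p + 1, q, ω, Ω, hs, hω, a, b, x => by
      have e₁ : p + 1 + q = p + (q + 1) := by omega
      set Ω' : (Fin (p + (q + 1)) → Fin n) → (Fin n → ℝ) → ℝ :=
        fun c x => ((q : ℝ) + 1) * Ω (c ∘ Fin.cast e₁) x with hΩ'
      have hs' : ∀ (c : Fin (p + (q + 1)) → Fin n) (σ : Equiv.Perm (Fin (p + (q + 1))))
          (x : Fin n → ℝ), Ω' (c ∘ σ) x = ((Equiv.Perm.sign σ : ℤ) : ℝ) * Ω' c x := by
        intro c σ x
        simp only [hΩ']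
        rw [sign_transport e₁ Ω hs c σ x]
        ring
      have hω' : ∀ a b x, superN ω a b x = Ω' (Fin.append a b) x := by
        intro a b x
        rw [superN_apply_eq ω Ω hs hω a b x]
      have IH := superNiter_apply_eq p (superN ω) Ω' hs' hω' a
        (b ∘ Fin.cast (Nat.succ_add q p)) x
      have hcast : superNiter (p + 1) ω a b x
          = superNiter p (superN ω) a (b ∘ Fin.cast (Nat.succ_add q p)) x := by
        show cast (congrArg (fun k => Superform n 0 k) (Nat.succ_add q p))
            (superNiter p (superN ω)) a b x = _
        exact superform_cast_apply (Nat.succ_add q p) _ a b x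
      rw [hcast, IH]
      simp only [hΩ']
      have hfun : ((b ∘ Fin.cast (Nat.succ_add q p)) ∘ Fin.cast (Nat.add_comm p (q + 1)))
          ∘ Fin.cast e₁ = b ∘ Fin.cast (Nat.add_comm (p + 1) q) := by
        funext i
        rfl
      rw [hfun]
      rw [← mul_assoc]
      congr 1
      have hp : (∏ j ∈ Finset.range (p + 1), (q + j + 1) : ℕ)
          = (∏ j ∈ Finset.range p, (q + 1 + j + 1)) * (q + 1) := by
        rw [Finset.prod_range_succ']
        congr 1
        exact Finset.prod_congr rfl fun j _ => by omega
      rw [hp]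
      push_cast
      ring

end Aux

/-- The `p`-fold iterate of the monodromy map satisfies `N^p = p! · J` as maps
`A^{p,0}(U) → A^{0,p}(U)`, where `J` is the flip map. -/
theorem superNiter_eq_factorial_superJ (n p : ℕ) (U : Set (Fin n → ℝ)) (hU : IsOpen U)
    (ω : Superform n p 0) (halt : ω.IsAlt) (hsm : ω.SmoothOn U) :
    ∀ (a : Fin 0 → Fin n) (b : Fin (0 + p) → Fin n), ∀ x ∈ U,
      superNiter p ω a b x
        = (p.factorial : ℝ) * superJ ω a (b ∘ Fin.cast (Nat.zero_add p).symm) x := by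
  intro a b x _
  have hs : ∀ (c : Fin (p + 0) → Fin n) (σ : Equiv.Perm (Fin (p + 0))) (x : Fin n → ℝ),
      (fun (c : Fin (p + 0) → Fin n) (x : Fin n → ℝ) => ω c Fin.elim0 x) (c ∘ σ) x
        = ((Equiv.Perm.sign σ : ℤ) : ℝ) * ω c Fin.elim0 x := by
    intro c σ x
    have := halt.1 c Fin.elim0 σ (1 : Equiv.Perm (Fin 0)) x
    simpa [Subsingleton.elim (Fin.elim0 ∘ (1 : Equiv.Perm (Fin 0)) : Fin 0 → Fin n) Fin.elim0]
      using this
  have hω : ∀ (a : Fin p → Fin n) (b : Fin 0 → Fin n) (x : Fin n → ℝ),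
      ω a b x = ω (Fin.append a b) Fin.elim0 x := by
    intro a b x
    have h1 : Fin.append a b = a := by
      funext i
      rw [fin_append_apply_lt _ _ _ i.isLt]
      exact congrArg a (Fin.ext rfl)
    rw [h1, Subsingleton.elim b Fin.elim0]
  have := superNiter_apply_eq p ω (fun c x => ω c Fin.elim0 x) hs hω a b x
  rw [this]
  have hprod : (∏ j ∈ Finset.range p, (0 + j + 1) : ℕ) = p.factorial := by
    rw [← Finset.prod_range_add_one_eq_factorial]
    exact Finset.prod_congr rfl fun j _ => by omega
  rw [hprod]
  show (p.factorial : ℝ) * ω (b ∘ Fin.cast (Nat.add_comm p 0)) Fin.elim0 x = _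
  unfold superJ
  have h2 : b ∘ Fin.cast (Nat.add_comm p 0) = b ∘ Fin.cast (Nat.zero_add p).symm := rfl
  rw [h2, Subsingleton.elim (a : Fin 0 → Fin n) Fin.elim0]
  ring
end

section
/- For superforms on an open subset U of a finite-dimensional real vector space: if ω is a (p,q)-form and ω' is a (p',q')-form, then d'(ω ∧ ω') = d'ω ∧ ω' + (-1)^{p+q} ω ∧ d'ω' and d''(ω ∧ ω') = d''ω ∧ ω' + (-1)^{p+q} ω ∧ d''ω'. -/
open scoped BigOperators

open Equiv Finset

/-! helpers -/

lemma neg_one_pow_congr_mod2 {a b : ℕ} (h : a % 2 = b % 2) : (-1:ℝ)^a = (-1:ℝ)^b := by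
  conv_lhs => rw [← Nat.div_add_mod a 2, pow_add, pow_mul, neg_one_sq, one_pow, one_mul]
  conv_rhs => rw [← Nat.div_add_mod b 2, pow_add, pow_mul, neg_one_sq, one_pow, one_mul]
  rw [h]

lemma neg_one_pow_mul_self (m : ℕ) : (-1:ℝ)^m * (-1:ℝ)^m = 1 := by
  rw [← pow_add, neg_one_pow_congr_mod2 (a := m + m) (b := 0) (by omega), pow_zero]

lemma val_succAbove' {N : ℕ} (m : Fin (N+1)) (i : Fin N) :
    ((m.succAbove i : Fin (N+1)) : ℕ) = if (i:ℕ) < (m:ℕ) then (i:ℕ) else (i:ℕ)+1 := by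
  rcases lt_or_ge (i:ℕ) (m:ℕ) with h | h
  · rw [Fin.succAbove_of_castSucc_lt _ _ (by simpa [Fin.lt_def] using h), if_pos h]; rfl
  · rw [Fin.succAbove_of_le_castSucc _ _ (by simpa [Fin.le_def] using h), if_neg (by omega)]; rfl

lemma fderiv_const_mul' {E : Type*} [NormedAddCommGroup E] [NormedSpace ℝ E] {f : E → ℝ}
    {x : E} (C : ℝ) : fderiv ℝ (fun y => C * f y) x = C • fderiv ℝ f x := by
  rcases eq_or_ne C 0 with rfl | hC
  · simp
  · by_cases hf : DifferentiableAt ℝ f x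
    · exact fderiv_const_mul hf C
    · rw [fderiv_zero_of_not_differentiableAt hf, fderiv_zero_of_not_differentiableAt ?_,
        smul_zero]
      intro hcontra
      exact hf (by simpa [← mul_assoc, inv_mul_cancel₀ hC] using hcontra.const_mul C⁻¹)

lemma fderiv_K_sum {E : Type*} [NormedAddCommGroup E] [NormedSpace ℝ E]
    {ι : Type*} [Fintype ι] (K : ℝ) (s : ι → ℝ) (f g : ι → E → ℝ)
    (x v : E) (hf : ∀ i, DifferentiableAt ℝ (f i) x) (hg : ∀ i, DifferentiableAt ℝ (g i) x) :
    fderiv ℝ (fun y => K * ∑ i, s i * f i y * g i y) x v =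
      K * ∑ i, s i * (fderiv ℝ (f i) x v * g i x + f i x * fderiv ℝ (g i) x v) := by
  have H : ∀ i ∈ Finset.univ, HasFDerivAt (fun y => s i * f i y * g i y)
      ((s i * f i x) • fderiv ℝ (g i) x + g i x • (s i • fderiv ℝ (f i) x)) x := fun i _ =>
    (((hf i).hasFDerivAt.const_mul (s i)).mul (hg i).hasFDerivAt)
  have H2 := (HasFDerivAt.fun_sum H).const_mul K
  rw [H2.fderiv]
  simp only [ContinuousLinearMap.smul_apply, ContinuousLinearMap.coe_sum', Finset.sum_apply,
    ContinuousLinearMap.add_apply, smul_eq_mul, Finset.mul_sum]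
  exact Finset.sum_congr rfl fun i _ => by ring

/-! permutation decomposition -/

def extZero {N : ℕ} (σ : Perm (Fin N)) : Perm (Fin (N+1)) :=
  Equiv.Perm.decomposeFin.symm (0, σ)

lemma extZero_zero {N : ℕ} (σ : Perm (Fin N)) : extZero σ 0 = 0 :=
  Perm.decomposeFin_symm_apply_zero 0 σ

lemma extZero_succ {N : ℕ} (σ : Perm (Fin N)) (j : Fin N) : extZero σ j.succ = (σ j).succ := by
  rw [extZero, Perm.decomposeFin_symm_apply_succ, Equiv.swap_self]; rfl

lemma sign_extZero {N : ℕ} (σ : Perm (Fin N)) : Perm.sign (extZero σ) = Perm.sign σ := by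
  rw [extZero, Perm.decomposeFin.symm_sign, if_pos rfl, one_mul]

def pivotPerm {N : ℕ} (ℓ k : Fin (N+1)) (σ : Perm (Fin N)) : Perm (Fin (N+1)) :=
  k.cycleRange.symm * extZero σ * ℓ.cycleRange

lemma pivotPerm_pivot {N : ℕ} (ℓ k : Fin (N+1)) (σ : Perm (Fin N)) :
    pivotPerm ℓ k σ ℓ = k := by
  simp [pivotPerm, Perm.mul_apply, Fin.cycleRange_self, extZero_zero]

lemma pivotPerm_succAbove {N : ℕ} (ℓ k : Fin (N+1)) (σ : Perm (Fin N)) (j : Fin N) :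
    pivotPerm ℓ k σ (ℓ.succAbove j) = k.succAbove (σ j) := by
  simp [pivotPerm, Perm.mul_apply, Fin.cycleRange_succAbove, extZero_succ]

lemma sign_pivotPerm {N : ℕ} (ℓ k : Fin (N+1)) (σ : Perm (Fin N)) :
    ((Perm.sign (pivotPerm ℓ k σ) : ℤ) : ℝ)
      = (-1:ℝ)^(ℓ:ℕ) * ((-1:ℝ)^(k:ℕ) * ((Perm.sign σ : ℤ) : ℝ)) := by
  have h1 : k.cycleRange.symm = k.cycleRange⁻¹ := rfl
  rw [pivotPerm, Perm.sign_mul, Perm.sign_mul, h1, Perm.sign_inv, Fin.sign_cycleRange,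
    Fin.sign_cycleRange, sign_extZero]
  push_cast
  ring

lemma pivotPerm_bijective {N : ℕ} (ℓ : Fin (N+1)) :
    Function.Bijective (fun kσ : Fin (N+1) × Perm (Fin N) => pivotPerm ℓ kσ.1 kσ.2) := by
  rw [Fintype.bijective_iff_injective_and_card]
  constructor
  · rintro ⟨k, σ⟩ ⟨k', σ'⟩ h
    simp only at h
    have hk : k = k' := by
      have := congrArg (fun ρ => ρ ℓ) h
      simpa [pivotPerm_pivot] using this
    subst hk
    have hσ' : extZero σ = extZero σ' := mul_left_cancel (mul_right_cancel h)
    have hext : ∀ j, σ j = σ' j := by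
      intro j
      have := congrArg (fun ρ => ρ j.succ) hσ'
      simp only [extZero_succ] at this
      exact Fin.succ_injective _ this
    have : σ = σ' := Equiv.ext hext
    rw [this]
  · simp [Fintype.card_perm, Nat.factorial_succ]

lemma sum_perm_pivot {N : ℕ} (ℓ : Fin (N+1)) (G : Fin (N+1) → (Fin N → Fin (N+1)) → ℝ) :
    ∑ ρ : Perm (Fin (N+1)), ((Perm.sign ρ : ℤ) : ℝ) * G (ρ ℓ) (fun j => ρ (ℓ.succAbove j))
      = (-1:ℝ)^(ℓ:ℕ) * ∑ k : Fin (N+1), ∑ σ : Perm (Fin N),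
          ((-1:ℝ)^(k:ℕ) * ((Perm.sign σ : ℤ) : ℝ)) * G k (fun j => k.succAbove (σ j)) := by
  rw [← Fintype.sum_bijective _ (pivotPerm_bijective ℓ)
      (fun kσ : Fin (N+1) × Perm (Fin N) =>
        ((Perm.sign (pivotPerm ℓ kσ.1 kσ.2) : ℤ) : ℝ) *
          G (pivotPerm ℓ kσ.1 kσ.2 ℓ) (fun j => pivotPerm ℓ kσ.1 kσ.2 (ℓ.succAbove j)))
      _ (fun kσ => rfl)]
  rw [Fintype.sum_prod_type, mul_sum]
  refine sum_congr rfl fun k _ => ?_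
  rw [mul_sum]
  refine sum_congr rfl fun σ _ => ?_
  simp only [pivotPerm_pivot, pivotPerm_succAbove, sign_pivotPerm]
  ring

lemma sum_perm_pivot' {M N : ℕ} (h : M = N + 1) (ℓ : Fin (N+1))
    (G : Fin (N+1) → (Fin N → Fin (N+1)) → ℝ) :
    ∑ σ' : Perm (Fin M), ((Perm.sign σ' : ℤ) : ℝ) *
        G (Fin.cast h (σ' (Fin.cast h.symm ℓ)))
          (fun j => Fin.cast h (σ' (Fin.cast h.symm (ℓ.succAbove j))))
      = (-1:ℝ)^(ℓ:ℕ) * ∑ k : Fin (N+1), ∑ σ : Perm (Fin N),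
          ((-1:ℝ)^(k:ℕ) * ((Perm.sign σ : ℤ) : ℝ)) * G k (fun j => k.succAbove (σ j)) := by
  rw [← sum_perm_pivot ℓ G]
  refine Fintype.sum_equiv (Equiv.permCongr (finCongr h)) _ _ fun σ' => ?_
  have hsgn : Perm.sign ((finCongr h).permCongr σ') = Perm.sign σ' :=
    Perm.sign_permCongr (finCongr h) σ'
  have happ : ∀ t : Fin (N+1), ((finCongr h).permCongr σ') t
      = Fin.cast h (σ' (Fin.cast h.symm t)) := fun t => by
    simp [Equiv.permCongr_apply, finCongr_apply]
  rw [hsgn]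
  simp only [happ]

lemma sum_perm_pivot'' {M N : ℕ} (h : M = N + 1) (ℓ : Fin (N+1)) (t u : ℝ)
    (ht : t * (-1:ℝ)^(ℓ:ℕ) = u) (G : Fin (N+1) → (Fin N → Fin (N+1)) → ℝ) :
    ∑ σ' : Perm (Fin M), ((Perm.sign σ' : ℤ) : ℝ) *
        (t * G (Fin.cast h (σ' (Fin.cast h.symm ℓ)))
          (fun j => Fin.cast h (σ' (Fin.cast h.symm (ℓ.succAbove j)))))
      = u * ∑ k : Fin (N+1), ∑ σ : Perm (Fin N),
          ((-1:ℝ)^(k:ℕ) * ((Perm.sign σ : ℤ) : ℝ)) * G k (fun j => k.succAbove (σ j)) := by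
  have : ∑ σ' : Perm (Fin M), ((Perm.sign σ' : ℤ) : ℝ) *
      (t * G (Fin.cast h (σ' (Fin.cast h.symm ℓ)))
        (fun j => Fin.cast h (σ' (Fin.cast h.symm (ℓ.succAbove j)))))
      = t * ∑ σ' : Perm (Fin M), ((Perm.sign σ' : ℤ) : ℝ) *
          G (Fin.cast h (σ' (Fin.cast h.symm ℓ)))
            (fun j => Fin.cast h (σ' (Fin.cast h.symm (ℓ.succAbove j)))) := by
    rw [Finset.mul_sum]; exact sum_congr rfl fun _ _ => by ring
  rw [this, sum_perm_pivot' h ℓ G, ← mul_assoc, ht]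

/-! canonical forms -/

noncomputable def Kfac (p p' q q' : ℕ) : ℝ :=
  (-1:ℝ)^(p'*q) / ((p.factorial * p'.factorial * q.factorial * q'.factorial : ℕ) : ℝ)

lemma Kfac1 {p p' q q' : ℕ} : ((p:ℝ)+1) * Kfac (p+1) p' q q' = Kfac p p' q q' := by
  have h0 : ((p.factorial : ℝ)) ≠ 0 := by exact_mod_cast p.factorial_ne_zero
  have h1 : ((p'.factorial : ℝ)) ≠ 0 := by exact_mod_cast p'.factorial_ne_zero
  have h2 : ((q.factorial : ℝ)) ≠ 0 := by exact_mod_cast q.factorial_ne_zero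
  have h3 : ((q'.factorial : ℝ)) ≠ 0 := by exact_mod_cast q'.factorial_ne_zero
  rw [Kfac, Kfac, Nat.factorial_succ]
  push_cast
  field_simp

lemma Kfac2 {p p' q q' : ℕ} :
    ((p':ℝ)+1) * Kfac p (p'+1) q q' * (-1:ℝ)^p = (-1:ℝ)^(p+q) * Kfac p p' q q' := by
  have h0 : ((p.factorial : ℝ)) ≠ 0 := by exact_mod_cast p.factorial_ne_zero
  have h1 : ((p'.factorial : ℝ)) ≠ 0 := by exact_mod_cast p'.factorial_ne_zero
  have h2 : ((q.factorial : ℝ)) ≠ 0 := by exact_mod_cast q.factorial_ne_zero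
  have h3 : ((q'.factorial : ℝ)) ≠ 0 := by exact_mod_cast q'.factorial_ne_zero
  rw [Kfac, Kfac, Nat.factorial_succ]
  push_cast
  field_simp
  ring_nf

noncomputable def wS1 {n p q p' q' : ℕ} (ω : Superform n p q) (ω' : Superform n p' q')
    (c : Fin (p + p' + 1) → Fin n) (d : Fin (q + q') → Fin n) (x : Fin n → ℝ) : ℝ :=
  ∑ τ : Perm (Fin (q + q')), ∑ k : Fin (p + p' + 1), ∑ σ : Perm (Fin (p + p')),
    ((Equiv.Perm.sign τ : ℤ) : ℝ) * ((-1:ℝ)^(k:ℕ) * ((Equiv.Perm.sign σ : ℤ) : ℝ)) *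
      (fderiv ℝ (fun y => ω (fun i => c (k.succAbove (σ (Fin.castAdd p' i)))) (fun j => d (τ (Fin.castAdd q' j))) y) x (Pi.single (c k) 1) *
        ω' (fun i => c (k.succAbove (σ (Fin.natAdd p i)))) (fun j => d (τ (Fin.natAdd q j))) x)

noncomputable def wS2 {n p q p' q' : ℕ} (ω : Superform n p q) (ω' : Superform n p' q')
    (c : Fin (p + p' + 1) → Fin n) (d : Fin (q + q') → Fin n) (x : Fin n → ℝ) : ℝ :=
  ∑ τ : Perm (Fin (q + q')), ∑ k : Fin (p + p' + 1), ∑ σ : Perm (Fin (p + p')),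
    ((Equiv.Perm.sign τ : ℤ) : ℝ) * ((-1:ℝ)^(k:ℕ) * ((Equiv.Perm.sign σ : ℤ) : ℝ)) *
      (ω (fun i => c (k.succAbove (σ (Fin.castAdd p' i)))) (fun j => d (τ (Fin.castAdd q' j))) x *
        fderiv ℝ (fun y => ω' (fun i => c (k.succAbove (σ (Fin.natAdd p i)))) (fun j => d (τ (Fin.natAdd q j))) y) x (Pi.single (c k) 1))

lemma hL {n p q p' q' : ℕ} {U : Set (Fin n → ℝ)} (hU : IsOpen U)
    (ω : Superform n p q) (ω' : Superform n p' q')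
    (hsm : ω.SmoothOn U) (hsm' : ω'.SmoothOn U)
    (c : Fin (p + p' + 1) → Fin n) (d : Fin (q + q') → Fin n) {x : Fin n → ℝ} (hx : x ∈ U) :
    superD' (superWedge ω ω') c d x
      = Kfac p p' q q' * (wS1 ω ω' c d x + wS2 ω ω' c d x) := by
  have hdf : ∀ (a : Fin p → Fin n) (b : Fin q → Fin n),
      DifferentiableAt ℝ (fun y => ω a b y) x := fun a b =>
    ((hsm a b).contDiffAt (hU.mem_nhds hx)).differentiableAt (by simp)
  have hdf' : ∀ (a : Fin p' → Fin n) (b : Fin q' → Fin n),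
      DifferentiableAt ℝ (fun y => ω' a b y) x := fun a b =>
    ((hsm' a b).contDiffAt (hU.mem_nhds hx)).differentiableAt (by simp)
  calc superD' (superWedge ω ω') c d x
      = ∑ k : Fin (p + p' + 1), (-1:ℝ)^(k:ℕ) *
          fderiv ℝ (fun y => superWedge ω ω' (c ∘ k.succAbove) d y) x (Pi.single (c k) 1) := rfl
    _ = ∑ k : Fin (p + p' + 1), (-1:ℝ)^(k:ℕ) *
          (Kfac p p' q q' * ∑ z : Perm (Fin (q + q')) × Perm (Fin (p + p')),
            (((Equiv.Perm.sign z.1 : ℤ) : ℝ) * ((Equiv.Perm.sign z.2 : ℤ) : ℝ)) *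
              (fderiv ℝ (fun y => ω (fun i => c (k.succAbove (z.2 (Fin.castAdd p' i)))) (fun j => d (z.1 (Fin.castAdd q' j))) y) x (Pi.single (c k) 1) *
                ω' (fun i => c (k.succAbove (z.2 (Fin.natAdd p i)))) (fun j => d (z.1 (Fin.natAdd q j))) x
                + ω (fun i => c (k.succAbove (z.2 (Fin.castAdd p' i)))) (fun j => d (z.1 (Fin.castAdd q' j))) x *
                  fderiv ℝ (fun y => ω' (fun i => c (k.succAbove (z.2 (Fin.natAdd p i)))) (fun j => d (z.1 (Fin.natAdd q j))) y) x (Pi.single (c k) 1))) := by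
        refine Finset.sum_congr rfl fun k _ => ?_
        congr 1
        have hfun : (fun y => superWedge ω ω' (c ∘ k.succAbove) d y)
            = (fun y => Kfac p p' q q' * ∑ z : Perm (Fin (q + q')) × Perm (Fin (p + p')),
                (((Equiv.Perm.sign z.1 : ℤ) : ℝ) * ((Equiv.Perm.sign z.2 : ℤ) : ℝ)) *
                  (fun y => ω (fun i => c (k.succAbove (z.2 (Fin.castAdd p' i)))) (fun j => d (z.1 (Fin.castAdd q' j))) y) y *
                  (fun y => ω' (fun i => c (k.succAbove (z.2 (Fin.natAdd p i)))) (fun j => d (z.1 (Fin.natAdd q j))) y) y) := by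
          funext y
          show Kfac p p' q q' * (∑ σ : Perm (Fin (p + p')), ∑ τ : Perm (Fin (q + q')),
              ((Equiv.Perm.sign σ : ℤ) : ℝ) * ((Equiv.Perm.sign τ : ℤ) : ℝ) *
                ω (fun i => c (k.succAbove (σ (Fin.castAdd p' i)))) (fun j => d (τ (Fin.castAdd q' j))) y *
                ω' (fun i => c (k.succAbove (σ (Fin.natAdd p i)))) (fun j => d (τ (Fin.natAdd q j))) y) = _
          rw [Fintype.sum_prod_type]
          rw [Finset.sum_comm]
          refine congrArg _ (Finset.sum_congr rfl fun τ _ => Finset.sum_congr rfl fun σ _ => ?_)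
          ring
        rw [hfun, fderiv_K_sum (Kfac p p' q q')
            (fun z : Perm (Fin (q + q')) × Perm (Fin (p + p')) => ((Equiv.Perm.sign z.1 : ℤ) : ℝ) * ((Equiv.Perm.sign z.2 : ℤ) : ℝ))
            (fun z y => ω (fun i => c (k.succAbove (z.2 (Fin.castAdd p' i)))) (fun j => d (z.1 (Fin.castAdd q' j))) y)
            (fun z y => ω' (fun i => c (k.succAbove (z.2 (Fin.natAdd p i)))) (fun j => d (z.1 (Fin.natAdd q j))) y)
            x (Pi.single (c k) 1) (fun z => hdf _ _) (fun z => hdf' _ _)]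
    _ = ∑ k : Fin (p + p' + 1), ∑ τ : Perm (Fin (q + q')), ∑ σ : Perm (Fin (p + p')),
          Kfac p p' q q' *
            (((Equiv.Perm.sign τ : ℤ) : ℝ) * ((-1:ℝ)^(k:ℕ) * ((Equiv.Perm.sign σ : ℤ) : ℝ)) *
      (fderiv ℝ (fun y => ω (fun i => c (k.succAbove (σ (Fin.castAdd p' i)))) (fun j => d (τ (Fin.castAdd q' j))) y) x (Pi.single (c k) 1) *
        ω' (fun i => c (k.succAbove (σ (Fin.natAdd p i)))) (fun j => d (τ (Fin.natAdd q j))) x)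
            + ((Equiv.Perm.sign τ : ℤ) : ℝ) * ((-1:ℝ)^(k:ℕ) * ((Equiv.Perm.sign σ : ℤ) : ℝ)) *
      (ω (fun i => c (k.succAbove (σ (Fin.castAdd p' i)))) (fun j => d (τ (Fin.castAdd q' j))) x *
        fderiv ℝ (fun y => ω' (fun i => c (k.succAbove (σ (Fin.natAdd p i)))) (fun j => d (τ (Fin.natAdd q j))) y) x (Pi.single (c k) 1))) := by
        refine Finset.sum_congr rfl fun k _ => ?_
        rw [Fintype.sum_prod_type]
        simp only [Finset.mul_sum]
        exact Finset.sum_congr rfl fun τ _ => Finset.sum_congr rfl fun σ _ => by ring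
    _ = ∑ τ : Perm (Fin (q + q')), ∑ k : Fin (p + p' + 1), ∑ σ : Perm (Fin (p + p')),
          Kfac p p' q q' *
            (((Equiv.Perm.sign τ : ℤ) : ℝ) * ((-1:ℝ)^(k:ℕ) * ((Equiv.Perm.sign σ : ℤ) : ℝ)) *
      (fderiv ℝ (fun y => ω (fun i => c (k.succAbove (σ (Fin.castAdd p' i)))) (fun j => d (τ (Fin.castAdd q' j))) y) x (Pi.single (c k) 1) *
        ω' (fun i => c (k.succAbove (σ (Fin.natAdd p i)))) (fun j => d (τ (Fin.natAdd q j))) x)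
            + ((Equiv.Perm.sign τ : ℤ) : ℝ) * ((-1:ℝ)^(k:ℕ) * ((Equiv.Perm.sign σ : ℤ) : ℝ)) *
      (ω (fun i => c (k.succAbove (σ (Fin.castAdd p' i)))) (fun j => d (τ (Fin.castAdd q' j))) x *
        fderiv ℝ (fun y => ω' (fun i => c (k.succAbove (σ (Fin.natAdd p i)))) (fun j => d (τ (Fin.natAdd q j))) y) x (Pi.single (c k) 1))) := Finset.sum_comm
    _ = Kfac p p' q q' * (wS1 ω ω' c d x + wS2 ω ω' c d x) := by
        rw [wS1, wS2]
        simp only [← Finset.sum_add_distrib, Finset.mul_sum]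

lemma hR1 {n p q p' q' : ℕ} (ω : Superform n p q) (ω' : Superform n p' q')
    (c : Fin (p + p' + 1) → Fin n) (d : Fin (q + q') → Fin n) (x : Fin n → ℝ)
    (h : p + 1 + p' = p + p' + 1) :
    superWedge (superD' ω) ω' (c ∘ Fin.cast h) d x = Kfac p p' q q' * wS1 ω ω' c d x := by
  calc superWedge (superD' ω) ω' (c ∘ Fin.cast h) d x
      = Kfac (p+1) p' q q' * ∑ σ' : Perm (Fin (p + 1 + p')), ∑ τ : Perm (Fin (q + q')),
          ((Equiv.Perm.sign σ' : ℤ) : ℝ) * ((Equiv.Perm.sign τ : ℤ) : ℝ) *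
            superD' ω (fun i => c (Fin.cast h (σ' (Fin.castAdd p' i))))
              (fun j => d (τ (Fin.castAdd q' j))) x *
            ω' (fun i => c (Fin.cast h (σ' (Fin.natAdd (p+1) i))))
              (fun j => d (τ (Fin.natAdd q j))) x := rfl
    _ = Kfac (p+1) p' q q' * ∑ τ : Perm (Fin (q + q')), ∑ m : Fin (p+1),
          ∑ σ' : Perm (Fin (p + 1 + p')),
          ((Equiv.Perm.sign σ' : ℤ) : ℝ) * ((-1:ℝ)^(m:ℕ) * (((Equiv.Perm.sign τ : ℤ) : ℝ) * (fderiv ℝ (fun y => ω (fun i => c (Fin.cast h (σ' (Fin.castAdd p' (m.succAbove i))))) (fun j => d (τ (Fin.castAdd q' j))) y) x (Pi.single (c (Fin.cast h (σ' (Fin.castAdd p' m)))) 1) * ω' (fun i => c (Fin.cast h (σ' (Fin.natAdd (p+1) i)))) (fun j => d (τ (Fin.natAdd q j))) x))) := by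
        congr 1
        rw [Finset.sum_comm]
        refine Finset.sum_congr rfl fun τ _ => ?_
        refine Eq.trans (Finset.sum_congr rfl fun σ' _ => ?_) Finset.sum_comm
        show ((Equiv.Perm.sign σ' : ℤ) : ℝ) * ((Equiv.Perm.sign τ : ℤ) : ℝ) *
            (∑ m : Fin (p+1), (-1:ℝ)^(m:ℕ) *
              fderiv ℝ (fun y => ω ((fun i => c (Fin.cast h (σ' (Fin.castAdd p' i)))) ∘ m.succAbove)
                (fun j => d (τ (Fin.castAdd q' j))) y) x
                (Pi.single (c (Fin.cast h (σ' (Fin.castAdd p' m)))) 1)) *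
            ω' (fun i => c (Fin.cast h (σ' (Fin.natAdd (p+1) i)))) (fun j => d (τ (Fin.natAdd q j))) x = _
        rw [Finset.mul_sum, Finset.sum_mul]
        refine Finset.sum_congr rfl fun m _ => ?_
        simp only [Function.comp_def]
        ring
    _ = Kfac (p+1) p' q q' * ∑ τ : Perm (Fin (q + q')), ∑ _m : Fin (p+1),
          ((1:ℝ) * ∑ k : Fin (p + p' + 1), ∑ σ : Perm (Fin (p + p')),
              ((-1:ℝ)^(k:ℕ) * ((Equiv.Perm.sign σ : ℤ) : ℝ)) * (((Equiv.Perm.sign τ : ℤ) : ℝ) * (fderiv ℝ (fun y => ω (fun i => c (k.succAbove (σ (Fin.castAdd p' i)))) (fun j => d (τ (Fin.castAdd q' j))) y) x (Pi.single (c k) 1) * ω' (fun i => c (k.succAbove (σ (Fin.natAdd p i)))) (fun j => d (τ (Fin.natAdd q j))) x))) := by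
        congr 1
        refine Finset.sum_congr rfl fun τ _ => Finset.sum_congr rfl fun m _ => ?_
        have L1 : ∀ i : Fin p, Fin.cast h.symm
            ((⟨(m:ℕ), by omega⟩ : Fin (p + p' + 1)).succAbove (Fin.castAdd p' i))
              = Fin.castAdd p' (m.succAbove i) := fun i => by
          apply Fin.ext; simp [val_succAbove']
        have L2 : ∀ i : Fin p', Fin.cast h.symm
            ((⟨(m:ℕ), by omega⟩ : Fin (p + p' + 1)).succAbove (Fin.natAdd p i))
              = Fin.natAdd (p+1) i := fun i => by
          have hm := m.isLt
          apply Fin.ext; simp [val_succAbove']; split <;> omega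
        have L3 : Fin.cast h.symm (⟨(m:ℕ), by omega⟩ : Fin (p + p' + 1)) = Fin.castAdd p' m := by
          apply Fin.ext; simp
        rw [show ((1:ℝ) * ∑ k : Fin (p + p' + 1), ∑ σ : Perm (Fin (p + p')),
              ((-1:ℝ)^(k:ℕ) * ((Equiv.Perm.sign σ : ℤ) : ℝ)) * (((Equiv.Perm.sign τ : ℤ) : ℝ) * (fderiv ℝ (fun y => ω (fun i => c (k.succAbove (σ (Fin.castAdd p' i)))) (fun j => d (τ (Fin.castAdd q' j))) y) x (Pi.single (c k) 1) * ω' (fun i => c (k.succAbove (σ (Fin.natAdd p i)))) (fun j => d (τ (Fin.natAdd q j))) x))) = ((1:ℝ) * ∑ k : Fin (p + p' + 1), ∑ σ : Perm (Fin (p + p')),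
            ((-1:ℝ)^(k:ℕ) * ((Equiv.Perm.sign σ : ℤ) : ℝ)) *
              ((fun (k : Fin (p + p' + 1)) (g : Fin (p + p') → Fin (p + p' + 1)) =>
                ((Equiv.Perm.sign τ : ℤ) : ℝ) * (fderiv ℝ (fun y => ω (fun i => c (g (Fin.castAdd p' i)))
                    (fun j => d (τ (Fin.castAdd q' j))) y) x (Pi.single (c k) 1) *
                  ω' (fun i => c (g (Fin.natAdd p i))) (fun j => d (τ (Fin.natAdd q j))) x))
                k (fun j => k.succAbove (σ j)))) from rfl]
        rw [← sum_perm_pivot'' h (⟨(m:ℕ), by omega⟩ : Fin (p + p' + 1)) ((-1:ℝ)^(m:ℕ)) 1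
            (by show (-1:ℝ)^(m:ℕ) * (-1:ℝ)^(m:ℕ) = 1; exact neg_one_pow_mul_self (m:ℕ))
            (fun (k : Fin (p + p' + 1)) (g : Fin (p + p') → Fin (p + p' + 1)) =>
               ((Equiv.Perm.sign τ : ℤ) : ℝ) * (fderiv ℝ (fun y => ω (fun i => c (g (Fin.castAdd p' i)))
                  (fun j => d (τ (Fin.castAdd q' j))) y) x (Pi.single (c k) 1) *
                ω' (fun i => c (g (Fin.natAdd p i))) (fun j => d (τ (Fin.natAdd q j))) x))]
        refine Finset.sum_congr rfl fun σ' _ => ?_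
        simp only [L1, L2, L3]
    _ = Kfac (p+1) p' q q' * ∑ τ : Perm (Fin (q + q')), (((p:ℝ)+1) * ∑ k : Fin (p + p' + 1), ∑ σ : Perm (Fin (p + p')),
              ((-1:ℝ)^(k:ℕ) * ((Equiv.Perm.sign σ : ℤ) : ℝ)) * (((Equiv.Perm.sign τ : ℤ) : ℝ) * (fderiv ℝ (fun y => ω (fun i => c (k.succAbove (σ (Fin.castAdd p' i)))) (fun j => d (τ (Fin.castAdd q' j))) y) x (Pi.single (c k) 1) * ω' (fun i => c (k.succAbove (σ (Fin.natAdd p i)))) (fun j => d (τ (Fin.natAdd q j))) x))) := by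
        congr 1
        refine Finset.sum_congr rfl fun τ _ => ?_
        rw [Finset.sum_const, Finset.card_univ, Fintype.card_fin, nsmul_eq_mul]
        rw [one_mul, Nat.cast_add, Nat.cast_one]
    _ = Kfac p p' q q' * wS1 ω ω' c d x := by
        rw [wS1, Finset.mul_sum, Finset.mul_sum]
        refine Finset.sum_congr rfl fun τ _ => ?_
        rw [← mul_assoc, mul_comm (Kfac (p+1) p' q q') ((p:ℝ)+1), Kfac1]
        refine congrArg _ (Finset.sum_congr rfl fun k _ => Finset.sum_congr rfl fun σ _ => by ring)

lemma hR2 {n p q p' q' : ℕ} (ω : Superform n p q) (ω' : Superform n p' q')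
    (c : Fin (p + p' + 1) → Fin n) (d : Fin (q + q') → Fin n) (x : Fin n → ℝ)
    (h : p + (p' + 1) = p + p' + 1) :
    superWedge ω (superD' ω') (c ∘ Fin.cast h) d x
      = (-1:ℝ)^(p+q) * (Kfac p p' q q' * wS2 ω ω' c d x) := by
  calc superWedge ω (superD' ω') (c ∘ Fin.cast h) d x
      = Kfac p (p'+1) q q' * ∑ σ' : Perm (Fin (p + (p' + 1))), ∑ τ : Perm (Fin (q + q')),
          ((Equiv.Perm.sign σ' : ℤ) : ℝ) * ((Equiv.Perm.sign τ : ℤ) : ℝ) *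
            ω (fun i => c (Fin.cast h (σ' (Fin.castAdd (p'+1) i))))
              (fun j => d (τ (Fin.castAdd q' j))) x *
            superD' ω' (fun i => c (Fin.cast h (σ' (Fin.natAdd p i))))
              (fun j => d (τ (Fin.natAdd q j))) x := rfl
    _ = Kfac p (p'+1) q q' * ∑ τ : Perm (Fin (q + q')), ∑ m : Fin (p'+1),
          ∑ σ' : Perm (Fin (p + (p' + 1))),
          ((Equiv.Perm.sign σ' : ℤ) : ℝ) * ((-1:ℝ)^(m:ℕ) * (((Equiv.Perm.sign τ : ℤ) : ℝ) * (ω (fun i => c (Fin.cast h (σ' (Fin.castAdd (p'+1) i)))) (fun j => d (τ (Fin.castAdd q' j))) x * fderiv ℝ (fun y => ω' (fun i => c (Fin.cast h (σ' (Fin.natAdd p (m.succAbove i))))) (fun j => d (τ (Fin.natAdd q j))) y) x (Pi.single (c (Fin.cast h (σ' (Fin.natAdd p m)))) 1)))) := by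
        congr 1
        rw [Finset.sum_comm]
        refine Finset.sum_congr rfl fun τ _ => ?_
        refine Eq.trans (Finset.sum_congr rfl fun σ' _ => ?_) Finset.sum_comm
        show ((Equiv.Perm.sign σ' : ℤ) : ℝ) * ((Equiv.Perm.sign τ : ℤ) : ℝ) *
            ω (fun i => c (Fin.cast h (σ' (Fin.castAdd (p'+1) i)))) (fun j => d (τ (Fin.castAdd q' j))) x *
            (∑ m : Fin (p'+1), (-1:ℝ)^(m:ℕ) *
              fderiv ℝ (fun y => ω' ((fun i => c (Fin.cast h (σ' (Fin.natAdd p i)))) ∘ m.succAbove)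
                (fun j => d (τ (Fin.natAdd q j))) y) x
                (Pi.single (c (Fin.cast h (σ' (Fin.natAdd p m)))) 1)) = _
        rw [Finset.mul_sum]
        refine Finset.sum_congr rfl fun m _ => ?_
        simp only [Function.comp_def]
        ring
    _ = Kfac p (p'+1) q q' * ∑ τ : Perm (Fin (q + q')), ∑ _m : Fin (p'+1),
          ((-1:ℝ)^p * ∑ k : Fin (p + p' + 1), ∑ σ : Perm (Fin (p + p')),
              ((-1:ℝ)^(k:ℕ) * ((Equiv.Perm.sign σ : ℤ) : ℝ)) * (((Equiv.Perm.sign τ : ℤ) : ℝ) * (ω (fun i => c (k.succAbove (σ (Fin.castAdd p' i)))) (fun j => d (τ (Fin.castAdd q' j))) x * fderiv ℝ (fun y => ω' (fun i => c (k.succAbove (σ (Fin.natAdd p i)))) (fun j => d (τ (Fin.natAdd q j))) y) x (Pi.single (c k) 1)))) := by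
        congr 1
        refine Finset.sum_congr rfl fun τ _ => Finset.sum_congr rfl fun m _ => ?_
        have hm := m.isLt
        have L1 : ∀ i : Fin p, Fin.cast h.symm
            ((⟨p + (m:ℕ), by omega⟩ : Fin (p + p' + 1)).succAbove (Fin.castAdd p' i))
              = Fin.castAdd (p'+1) i := fun i => by
          have hi := i.isLt
          apply Fin.ext; simp [val_succAbove']
          first
          | omega
          | (split <;> omega)
          | (split <;> split <;> omega)
        have L2 : ∀ i : Fin p', Fin.cast h.symm
            ((⟨p + (m:ℕ), by omega⟩ : Fin (p + p' + 1)).succAbove (Fin.natAdd p i))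
              = Fin.natAdd p (m.succAbove i) := fun i => by
          apply Fin.ext; simp [val_succAbove']
          first
          | omega
          | (split <;> omega)
          | (split <;> split <;> omega)
        have L3 : Fin.cast h.symm (⟨p + (m:ℕ), by omega⟩ : Fin (p + p' + 1)) = Fin.natAdd p m := by
          apply Fin.ext; simp
        rw [show ((-1:ℝ)^p * ∑ k : Fin (p + p' + 1), ∑ σ : Perm (Fin (p + p')),
              ((-1:ℝ)^(k:ℕ) * ((Equiv.Perm.sign σ : ℤ) : ℝ)) * (((Equiv.Perm.sign τ : ℤ) : ℝ) * (ω (fun i => c (k.succAbove (σ (Fin.castAdd p' i)))) (fun j => d (τ (Fin.castAdd q' j))) x * fderiv ℝ (fun y => ω' (fun i => c (k.succAbove (σ (Fin.natAdd p i)))) (fun j => d (τ (Fin.natAdd q j))) y) x (Pi.single (c k) 1)))) = ((-1:ℝ)^p * ∑ k : Fin (p + p' + 1), ∑ σ : Perm (Fin (p + p')),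
            ((-1:ℝ)^(k:ℕ) * ((Equiv.Perm.sign σ : ℤ) : ℝ)) *
              ((fun (k : Fin (p + p' + 1)) (g : Fin (p + p') → Fin (p + p' + 1)) =>
                ((Equiv.Perm.sign τ : ℤ) : ℝ) * (ω (fun i => c (g (Fin.castAdd p' i)))
                    (fun j => d (τ (Fin.castAdd q' j))) x *
                  fderiv ℝ (fun y => ω' (fun i => c (g (Fin.natAdd p i)))
                    (fun j => d (τ (Fin.natAdd q j))) y) x (Pi.single (c k) 1)))
                k (fun j => k.succAbove (σ j)))) from rfl]
        rw [← sum_perm_pivot'' h (⟨p + (m:ℕ), by omega⟩ : Fin (p + p' + 1)) ((-1:ℝ)^(m:ℕ)) ((-1:ℝ)^p)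
            (by show (-1:ℝ)^(m:ℕ) * (-1:ℝ)^(p + (m:ℕ)) = (-1:ℝ)^p
                rw [← pow_add]; exact neg_one_pow_congr_mod2 (by omega))
            (fun (k : Fin (p + p' + 1)) (g : Fin (p + p') → Fin (p + p' + 1)) =>
                ((Equiv.Perm.sign τ : ℤ) : ℝ) * (ω (fun i => c (g (Fin.castAdd p' i)))
                    (fun j => d (τ (Fin.castAdd q' j))) x *
                  fderiv ℝ (fun y => ω' (fun i => c (g (Fin.natAdd p i)))
                    (fun j => d (τ (Fin.natAdd q j))) y) x (Pi.single (c k) 1)))]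
        refine Finset.sum_congr rfl fun σ' _ => ?_
        simp only [L1, L2, L3]
    _ = Kfac p (p'+1) q q' * ∑ τ : Perm (Fin (q + q')), (((p':ℝ)+1) * ((-1:ℝ)^p * ∑ k : Fin (p + p' + 1), ∑ σ : Perm (Fin (p + p')),
              ((-1:ℝ)^(k:ℕ) * ((Equiv.Perm.sign σ : ℤ) : ℝ)) * (((Equiv.Perm.sign τ : ℤ) : ℝ) * (ω (fun i => c (k.succAbove (σ (Fin.castAdd p' i)))) (fun j => d (τ (Fin.castAdd q' j))) x * fderiv ℝ (fun y => ω' (fun i => c (k.succAbove (σ (Fin.natAdd p i)))) (fun j => d (τ (Fin.natAdd q j))) y) x (Pi.single (c k) 1))))) := by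
        congr 1
        refine Finset.sum_congr rfl fun τ _ => ?_
        rw [Finset.sum_const, Finset.card_univ, Fintype.card_fin, nsmul_eq_mul]
        rw [Nat.cast_add, Nat.cast_one]
    _ = (-1:ℝ)^(p+q) * (Kfac p p' q q' * wS2 ω ω' c d x) := by
        rw [wS2, Finset.mul_sum, Finset.mul_sum, Finset.mul_sum]
        refine Finset.sum_congr rfl fun τ _ => ?_
        rw [show (∑ k : Fin (p + p' + 1), ∑ σ : Perm (Fin (p + p')),
            ((Equiv.Perm.sign τ : ℤ) : ℝ) * ((-1:ℝ)^(k:ℕ) * ((Equiv.Perm.sign σ : ℤ) : ℝ)) *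
              (ω (fun i => c (k.succAbove (σ (Fin.castAdd p' i)))) (fun j => d (τ (Fin.castAdd q' j))) x *
                fderiv ℝ (fun y => ω' (fun i => c (k.succAbove (σ (Fin.natAdd p i)))) (fun j => d (τ (Fin.natAdd q j))) y) x (Pi.single (c k) 1)))
            = ∑ k : Fin (p + p' + 1), ∑ σ : Perm (Fin (p + p')),
              ((-1:ℝ)^(k:ℕ) * ((Equiv.Perm.sign σ : ℤ) : ℝ)) * (((Equiv.Perm.sign τ : ℤ) : ℝ) * (ω (fun i => c (k.succAbove (σ (Fin.castAdd p' i)))) (fun j => d (τ (Fin.castAdd q' j))) x * fderiv ℝ (fun y => ω' (fun i => c (k.succAbove (σ (Fin.natAdd p i)))) (fun j => d (τ (Fin.natAdd q j))) y) x (Pi.single (c k) 1))) from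
          Finset.sum_congr rfl fun k _ => Finset.sum_congr rfl fun σ _ => by ring]
        linear_combination (∑ k : Fin (p + p' + 1), ∑ σ : Perm (Fin (p + p')),
              ((-1:ℝ)^(k:ℕ) * ((Equiv.Perm.sign σ : ℤ) : ℝ)) * (((Equiv.Perm.sign τ : ℤ) : ℝ) * (ω (fun i => c (k.succAbove (σ (Fin.castAdd p' i)))) (fun j => d (τ (Fin.castAdd q' j))) x * fderiv ℝ (fun y => ω' (fun i => c (k.succAbove (σ (Fin.natAdd p i)))) (fun j => d (τ (Fin.natAdd q j))) y) x (Pi.single (c k) 1)))) * (Kfac2 (p:=p) (p':=p') (q:=q) (q':=q'))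
lemma superJ_apply {n p q : ℕ} (ω : Superform n p q) (a : Fin q → Fin n) (b : Fin p → Fin n)
    (x : Fin n → ℝ) : superJ ω a b x = (-1:ℝ)^(p*q) * ω b a x := rfl

lemma superJ_superJ {n p q : ℕ} (ω : Superform n p q) : superJ (superJ ω) = ω := by
  funext a b x
  show (-1:ℝ)^(q*p) * ((-1:ℝ)^(p*q) * ω a b x) = ω a b x
  rw [← mul_assoc, ← pow_add, show q*p + p*q = 2*(p*q) from by ring, pow_mul]
  norm_num

lemma superJ_smooth {n p q : ℕ} {U : Set (Fin n → ℝ)} {ω : Superform n p q}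
    (hsm : ω.SmoothOn U) : (superJ ω).SmoothOn U := fun a b =>
  contDiffOn_const.mul (hsm b a)

lemma superD''_eq {n p q : ℕ} (ω : Superform n p q) :
    superD'' ω = superJ (superD' (superJ ω)) := by
  funext a b x
  have hs : (-1:ℝ)^((q+1)*p) * (-1:ℝ)^(p*q) = (-1:ℝ)^p := by
    rw [← pow_add, show (q+1)*p + p*q = p + 2*(p*q) from by ring, pow_add, pow_mul]
    norm_num
  show (-1:ℝ)^p * ∑ k : Fin (q+1), (-1:ℝ)^(k:ℕ) *
        fderiv ℝ (fun y => ω a (b ∘ k.succAbove) y) x (Pi.single (b k) 1)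
      = (-1:ℝ)^((q+1)*p) * ∑ k : Fin (q+1), (-1:ℝ)^(k:ℕ) *
        fderiv ℝ (fun y => (-1:ℝ)^(p*q) * ω a (b ∘ k.succAbove) y) x (Pi.single (b k) 1)
  simp only [fderiv_const_mul', ContinuousLinearMap.smul_apply, smul_eq_mul]
  rw [Finset.mul_sum, Finset.mul_sum]
  refine Finset.sum_congr rfl fun k _ => ?_
  rw [← hs]
  ring

lemma superJ_wedge {n p q p' q' : ℕ} (ω : Superform n p q) (ω' : Superform n p' q') :
    superJ (superWedge ω ω') = superWedge (superJ ω) (superJ ω') := by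
  funext a b x
  have hF : (((Nat.factorial q * Nat.factorial q' * Nat.factorial p * Nat.factorial p' : ℕ)) : ℝ)
      = (((Nat.factorial p * Nat.factorial p' * Nat.factorial q * Nat.factorial q' : ℕ)) : ℝ) := by
    push_cast; ring
  have hsc : (-1:ℝ)^((p+p')*(q+q')) * (-1:ℝ)^(p'*q)
      = (-1:ℝ)^(q'*p) * (-1:ℝ)^(p*q) * (-1:ℝ)^(p'*q') := by
    rw [← pow_add, ← pow_add, ← pow_add]
    refine neg_one_pow_congr_mod2 ?_
    rw [show (p+p')*(q+q') + p'*q = (q'*p + (p*q + p'*q')) + 2*(p'*q) from by ring,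
      Nat.add_mul_mod_self_left,
      show q'*p + p*q + p'*q' = q'*p + (p*q + p'*q') from by ring]
  show (-1:ℝ)^((p+p')*(q+q')) * (((-1:ℝ)^(p'*q) /
        ((Nat.factorial p * Nat.factorial p' * Nat.factorial q * Nat.factorial q' : ℕ) : ℝ)) *
      ∑ σ : Equiv.Perm (Fin (p + p')), ∑ τ : Equiv.Perm (Fin (q + q')),
        ((Equiv.Perm.sign σ : ℤ) : ℝ) * ((Equiv.Perm.sign τ : ℤ) : ℝ) *
          ω (fun i => b (σ (Fin.castAdd p' i))) (fun j => a (τ (Fin.castAdd q' j))) x *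
          ω' (fun i => b (σ (Fin.natAdd p i))) (fun j => a (τ (Fin.natAdd q j))) x)
    = ((-1:ℝ)^(q'*p) /
        ((Nat.factorial q * Nat.factorial q' * Nat.factorial p * Nat.factorial p' : ℕ) : ℝ)) *
      ∑ σ : Equiv.Perm (Fin (q + q')), ∑ τ : Equiv.Perm (Fin (p + p')),
        ((Equiv.Perm.sign σ : ℤ) : ℝ) * ((Equiv.Perm.sign τ : ℤ) : ℝ) *
          ((-1:ℝ)^(p*q) * ω (fun j => b (τ (Fin.castAdd p' j))) (fun i => a (σ (Fin.castAdd q' i))) x) *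
          ((-1:ℝ)^(p'*q') * ω' (fun j => b (τ (Fin.natAdd p j))) (fun i => a (σ (Fin.natAdd q i))) x)
  rw [hF]
  conv_rhs => rw [Finset.sum_comm]
  simp only [Finset.mul_sum]
  refine Finset.sum_congr rfl fun σ _ => Finset.sum_congr rfl fun τ _ => ?_
  set F := ((Nat.factorial p * Nat.factorial p' * Nat.factorial q * Nat.factorial q' : ℕ) : ℝ)
  set A := ω (fun i => b (σ (Fin.castAdd p' i))) (fun j => a (τ (Fin.castAdd q' j))) x
  set B := ω' (fun i => b (σ (Fin.natAdd p i))) (fun j => a (τ (Fin.natAdd q j))) x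
  set s1 := ((Equiv.Perm.sign σ : ℤ) : ℝ)
  set s2 := ((Equiv.Perm.sign τ : ℤ) : ℝ)
  linear_combination (s1 * s2 * A * B / F) * hsc

/-- The Leibniz rules `d'(ω ∧ ω') = d'ω ∧ ω' + (-1)^{p+q} ω ∧ d'ω'` and
`d''(ω ∧ ω') = d''ω ∧ ω' + (-1)^{p+q} ω ∧ d''ω'` for superforms. -/
theorem superD_wedge_leibniz (n p q p' q' : ℕ) (U : Set (Fin n → ℝ)) (hU : IsOpen U)
    (ω : Superform n p q) (ω' : Superform n p' q')
    (halt : ω.IsAlt) (halt' : ω'.IsAlt)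
    (hsm : ω.SmoothOn U) (hsm' : ω'.SmoothOn U) :
    (∀ (c : Fin (p + p' + 1) → Fin n) (d : Fin (q + q') → Fin n), ∀ x ∈ U,
      superD' (superWedge ω ω') c d x
        = superWedge (superD' ω) ω'
            (c ∘ Fin.cast (by omega : (p + 1) + p' = p + p' + 1)) d x
          + (-1 : ℝ) ^ (p + q) * superWedge ω (superD' ω')
              (c ∘ Fin.cast (by omega : p + (p' + 1) = p + p' + 1)) d x) ∧
    (∀ (c : Fin (p + p') → Fin n) (d : Fin (q + q' + 1) → Fin n), ∀ x ∈ U,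
      superD'' (superWedge ω ω') c d x
        = superWedge (superD'' ω) ω' c
            (d ∘ Fin.cast (by omega : (q + 1) + q' = q + q' + 1)) x
          + (-1 : ℝ) ^ (p + q) * superWedge ω (superD'' ω') c
              (d ∘ Fin.cast (by omega : q + (q' + 1) = q + q' + 1)) x) := by
  refine ⟨fun c d x hx => ?_, fun c d x hx => ?_⟩
  · rw [hL hU ω ω' hsm hsm' c d hx, hR1 ω ω' c d x (by omega), hR2 ω ω' c d x (by omega)]
    linear_combination (-(Kfac p p' q q' * wS2 ω ω' c d x)) * neg_one_pow_mul_self (p+q)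
  · have hw1 : superWedge (superD'' ω) ω'
        = superJ (superWedge (superD' (superJ ω)) (superJ ω')) := by
      rw [superJ_wedge, superJ_superJ, superD''_eq]
    have hw2 : superWedge ω (superD'' ω')
        = superJ (superWedge (superJ ω) (superD' (superJ ω'))) := by
      rw [superJ_wedge, superJ_superJ, superD''_eq]
    rw [superD''_eq (superWedge ω ω'), superJ_wedge ω ω', hw1, hw2]
    simp only [superJ_apply]
    rw [hL hU (superJ ω) (superJ ω') (superJ_smooth hsm) (superJ_smooth hsm') d c hx,
        hR1 (superJ ω) (superJ ω') d c x (by omega),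
        hR2 (superJ ω) (superJ ω') d c x (by omega)]
    have hx1 : (-1:ℝ)^((q+1+q')*(p+p')) = (-1:ℝ)^((q+q'+1)*(p+p')) := by
      rw [show q+1+q' = q+q'+1 from by omega]
    have hx2 : (-1:ℝ)^((q+(q'+1))*(p+p')) = (-1:ℝ)^((q+q'+1)*(p+p')) := by
      rw [show q+(q'+1) = q+q'+1 from by omega]
    have hx3 : (-1:ℝ)^(q+p) = (-1:ℝ)^(p+q) := by rw [Nat.add_comm]
    rw [hx1, hx2, hx3]
    linear_combination (-((-1:ℝ)^((q+q'+1)*(p+p')) *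
      (Kfac q q' p p' * wS2 (superJ ω) (superJ ω') d c x))) * neg_one_pow_mul_self (p+q)
end

section
/- For a star-shaped region with respect to a point P, the star-shaped integration map I_P satisfies: if α is a closed p-form (p ≥ 1) on a star-shaped open set U ⊆ ℝ^m with respect to P ∈ U, then d(I_P(α)) = α, where I_P(α) = ∫_0^1 ⟨∂/∂t, γ_P*α⟩ dt and γ_P(x,t) = (1-t)P + tx. -/
open scoped BigOperators

/-- The exterior derivative, in coordinates, of a (raw) `k`-form `η` on `ℝ^m`:
`(dη)(x)(v_0, …, v_k) = ∑_j (-1)^j ∂_{v_j}(η(·)(v_0, …, v̂_j, …, v_k))(x)`. -/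
noncomputable def extDerRaw {m k : ℕ} (η : (Fin m → ℝ) → (Fin k → (Fin m → ℝ)) → ℝ)
    (x : Fin m → ℝ) (v : Fin (k + 1) → (Fin m → ℝ)) : ℝ :=
  ∑ j : Fin (k + 1), (-1 : ℝ) ^ (j : ℕ) * fderiv ℝ (fun y => η y (v ∘ j.succAbove)) x (v j)

/-- Star-shaped integration with respect to `P` of a `(p+1)`-form `α`, via the homotopy
`γ_P(x,t) = (1-t)P + tx`: `I_P(α)(x)(w) = ∫_0^1 α(γ_P(x,t))(x - P, t•w) dt`. -/
noncomputable def starIntRaw {m p : ℕ} (P : Fin m → ℝ)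
    (α : (Fin m → ℝ) → (Fin (p + 1) → (Fin m → ℝ)) → ℝ)
    (x : Fin m → ℝ) (w : Fin p → (Fin m → ℝ)) : ℝ :=
  ∫ t in (0 : ℝ)..1, α ((1 - t) • P + t • x) (Fin.cons (x - P) (fun i => t • w i))

set_option synthInstance.maxHeartbeats 1000000
set_option maxHeartbeats 1000000

namespace PoincareStarAux

open Metric MeasureTheory

variable {m p : ℕ}

theorem cons_expand (A : (Fin m → ℝ) [⋀^Fin (p + 1)]→ₗ[ℝ] ℝ) (s : Fin m → ℝ)
    (w : Fin p → (Fin m → ℝ)) :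
    A (Fin.cons s w) = ∑ k : Fin m, s k * A (Fin.cons (Pi.single k (1:ℝ) : Fin m → ℝ) w) := by
  have h0 : ∀ z : Fin m → ℝ, (Fin.cons z w : Fin (p+1) → Fin m → ℝ) = Function.update (Fin.cons s w : Fin (p+1) → Fin m → ℝ) 0 z := by
    intro z; rw [Fin.update_cons_zero]
  have hs : s = ∑ k : Fin m, s k • (Pi.single k (1:ℝ) : Fin m → ℝ) := by
    ext j
    simp [Pi.single_apply]
  conv_lhs => rw [h0 s, hs]
  rw [← A.coe_multilinearMap]
  rw [A.toMultilinearMap.map_update_sum]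
  refine Finset.sum_congr rfl fun k _ => ?_
  rw [A.toMultilinearMap.map_update_smul, smul_eq_mul, Fin.update_cons_zero]

theorem cons_smul (A : (Fin m → ℝ) [⋀^Fin (p + 1)]→ₗ[ℝ] ℝ) (s : Fin m → ℝ)
    (w : Fin p → (Fin m → ℝ)) (t : ℝ) :
    A (Fin.cons s (fun i => t • w i)) = t ^ p * A (Fin.cons s w) := by
  have h : (Fin.cons s (fun i => t • w i) : Fin (p+1) → Fin m → ℝ)
      = fun i => (Fin.cons (1:ℝ) (fun _ => t) : Fin (p+1) → ℝ) i • (Fin.cons s w : Fin (p+1) → Fin m → ℝ) i := by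
    funext i
    refine Fin.cases ?_ (fun i => ?_) i <;> simp
  rw [h]
  rw [← A.coe_multilinearMap]
  rw [A.toMultilinearMap.map_smul_univ]
  simp [Fin.prod_cons, Finset.prod_const]

theorem cons_cycle (A : (Fin m → ℝ) [⋀^Fin (p + 1)]→ₗ[ℝ] ℝ)
    (v : Fin (p + 1) → Fin m → ℝ) (j : Fin (p + 1)) :
    A (Fin.cons (v j) (v ∘ j.succAbove)) = (-1 : ℝ) ^ (j : ℕ) * A v := by
  have h : Fin.cons (v j) (v ∘ j.succAbove) = v ∘ (j.cycleRange.symm : Equiv.Perm (Fin (p+1))) := by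
    funext i
    refine Fin.cases ?_ (fun i => ?_) i
    · simp [Fin.cycleRange_symm_zero]
    · simp [Fin.cycleRange_symm_succ]
  rw [h, A.map_perm v _]
  have hs : Equiv.Perm.sign (j.cycleRange.symm : Equiv.Perm (Fin (p+1))) = (-1) ^ (j : ℕ) := by
    rw [show (j.cycleRange.symm : Equiv.Perm (Fin (p+1))) = (j.cycleRange)⁻¹ from rfl,
      Equiv.Perm.sign_inv, Fin.sign_cycleRange]
  rw [hs]
  simp [Units.smul_def]

noncomputable def DW (α : (Fin m → ℝ) → (Fin m → ℝ) [⋀^Fin (p + 1)]→ₗ[ℝ] ℝ)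
    (P : Fin m → ℝ) (w : Fin p → Fin m → ℝ) (x : Fin m → ℝ) (t : ℝ) :
    (Fin m → ℝ) →L[ℝ] ℝ :=
  ∑ k : Fin m,
    ((x k - P k) • ((fderiv ℝ (fun z => α z (Fin.cons (Pi.single k (1:ℝ) : Fin m → ℝ) w))
          ((1 - t) • P + t • x)).comp (t • ContinuousLinearMap.id ℝ (Fin m → ℝ)))
      + (α ((1 - t) • P + t • x) (Fin.cons (Pi.single k (1:ℝ) : Fin m → ℝ) w)) •
          (ContinuousLinearMap.proj k : ((Fin m → ℝ) →L[ℝ] ℝ)))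

variable {U : Set (Fin m → ℝ)} {P : Fin m → ℝ}
  {α : (Fin m → ℝ) → (Fin m → ℝ) [⋀^Fin (p + 1)]→ₗ[ℝ] ℝ}

theorem hasFDerivAt_DW (hU : IsOpen U)
    (hsmooth : ∀ v : Fin (p + 1) → (Fin m → ℝ), ContDiffOn ℝ (⊤ : ℕ∞) (fun x => α x v) U)
    (w : Fin p → Fin m → ℝ) (x : Fin m → ℝ) (t : ℝ)
    (hy : ((1 - t) • P + t • x) ∈ U) :
    HasFDerivAt (fun x' => α ((1 - t) • P + t • x') (Fin.cons (x' - P) w)) (DW α P w x t) x := by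
  have hfun : (fun x' => α ((1 - t) • P + t • x') (Fin.cons (x' - P) w))
      = fun x' => ∑ k : Fin m, (x' k - P k) *
          α ((1 - t) • P + t • x') (Fin.cons (Pi.single k (1:ℝ) : Fin m → ℝ) w) := by
    funext x'
    exact cons_expand _ _ w
  rw [hfun]
  unfold DW
  refine HasFDerivAt.fun_sum fun k _ => ?_
  have h1 : HasFDerivAt (fun x' : Fin m → ℝ => x' k - P k)
      (ContinuousLinearMap.proj k : ((Fin m → ℝ) →L[ℝ] ℝ)) x :=
    (ContinuousLinearMap.proj k : ((Fin m → ℝ) →L[ℝ] ℝ)).hasFDerivAt.sub_const _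
  have hγ : HasFDerivAt (fun x' : Fin m → ℝ => (1 - t) • P + t • x')
      (t • ContinuousLinearMap.id ℝ (Fin m → ℝ)) x := by
    have h2 : HasFDerivAt (fun x' : Fin m → ℝ => t • x')
        (t • ContinuousLinearMap.id ℝ (Fin m → ℝ)) x :=
      (ContinuousLinearMap.id ℝ (Fin m → ℝ)).hasFDerivAt.const_smul t
    exact h2.const_add ((1 - t) • P)
  have hck : HasFDerivAt (fun z => α z (Fin.cons (Pi.single k (1:ℝ) : Fin m → ℝ) w))
      (fderiv ℝ (fun z => α z (Fin.cons (Pi.single k (1:ℝ) : Fin m → ℝ) w)) ((1 - t) • P + t • x))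
      ((1 - t) • P + t • x) :=
    (((hsmooth _).contDiffAt (hU.mem_nhds hy)).differentiableAt (by simp)).hasFDerivAt
  exact h1.mul (by have := hck.comp x hγ; exact this)

theorem DW_apply (hU : IsOpen U)
    (hsmooth : ∀ v : Fin (p + 1) → (Fin m → ℝ), ContDiffOn ℝ (⊤ : ℕ∞) (fun x => α x v) U)
    (w : Fin p → Fin m → ℝ) (x : Fin m → ℝ) (t : ℝ) (ξ : Fin m → ℝ)
    (hy : ((1 - t) • P + t • x) ∈ U) :
    DW α P w x t ξ = α ((1 - t) • P + t • x) (Fin.cons ξ w)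
      + t * fderiv ℝ (fun z => α z (Fin.cons (x - P) w)) ((1 - t) • P + t • x) ξ := by
  set y := (1 - t) • P + t • x with hy'
  have hdiff : ∀ k : Fin m,
      HasFDerivAt (fun z => α z (Fin.cons (Pi.single k (1:ℝ) : Fin m → ℝ) w))
        (fderiv ℝ (fun z => α z (Fin.cons (Pi.single k (1:ℝ) : Fin m → ℝ) w)) y) y :=
    fun k => (((hsmooth _).contDiffAt (hU.mem_nhds hy)).differentiableAt (by simp)).hasFDerivAt
  have hsum : HasFDerivAt (fun z => α z (Fin.cons (x - P) w))
      (∑ k : Fin m, (x k - P k) •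
        fderiv ℝ (fun z => α z (Fin.cons (Pi.single k (1:ℝ) : Fin m → ℝ) w)) y) y := by
    have hfun : (fun z => α z (Fin.cons (x - P) w))
        = fun z => ∑ k : Fin m, (x k - P k) *
            α z (Fin.cons (Pi.single k (1:ℝ) : Fin m → ℝ) w) := by
      funext z; exact cons_expand _ _ w
    rw [hfun]
    exact HasFDerivAt.fun_sum fun k _ => (hdiff k).const_mul _
  rw [hsum.fderiv]
  unfold DW
  rw [cons_expand (α y) ξ w]
  simp only [ContinuousLinearMap.sum_apply, ContinuousLinearMap.add_apply,
    ContinuousLinearMap.smul_apply, ContinuousLinearMap.comp_apply,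
    ContinuousLinearMap.proj_apply, ContinuousLinearMap.id_apply, smul_eq_mul,
    ContinuousLinearMap.map_smul, Finset.mul_sum, Finset.sum_add_distrib]
  rw [add_comm]
  congr 1
  · exact Finset.sum_congr rfl fun k _ => by ring
  · exact Finset.sum_congr rfl fun k _ => by ring

theorem gamma_cont : Continuous (fun q : (Fin m → ℝ) × ℝ => (1 - q.2) • P + q.2 • q.1) := by
  fun_prop

theorem DW_contOn (hU : IsOpen U)
    (hsmooth : ∀ v : Fin (p + 1) → (Fin m → ℝ), ContDiffOn ℝ (⊤ : ℕ∞) (fun x => α x v) U)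
    (w : Fin p → Fin m → ℝ) :
    ContinuousOn (fun q : (Fin m → ℝ) × ℝ => DW α P w q.1 q.2)
      {q : (Fin m → ℝ) × ℝ | (1 - q.2) • P + q.2 • q.1 ∈ U} := by
  set S := {q : (Fin m → ℝ) × ℝ | (1 - q.2) • P + q.2 • q.1 ∈ U}
  have hγ : ContinuousOn (fun q : (Fin m → ℝ) × ℝ => (1 - q.2) • P + q.2 • q.1) S :=
    gamma_cont.continuousOn
  have hmaps : Set.MapsTo (fun q : (Fin m → ℝ) × ℝ => (1 - q.2) • P + q.2 • q.1) S U :=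
    fun q hq => hq
  unfold DW
  refine continuousOn_finset_sum _ fun k _ => ContinuousOn.add (ContinuousOn.fun_smul ?_ ?_)
    (ContinuousOn.fun_smul ?_ continuousOn_const)
  · exact ((continuous_apply k).comp continuous_fst).sub continuous_const |>.continuousOn
  · refine ContinuousOn.clm_comp ?_ ?_
    · exact (((hsmooth _).continuousOn_fderiv_of_isOpen hU (by simp)).comp hγ hmaps)
    · exact (continuous_snd.smul continuous_const).continuousOn
  · exact ((hsmooth _).continuousOn.comp hγ hmaps)

theorem contOn_t
    (hsmooth : ∀ v : Fin (p + 1) → (Fin m → ℝ), ContDiffOn ℝ (⊤ : ℕ∞) (fun x => α x v) U)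
    (hstar : ∀ x ∈ U, ∀ t ∈ Set.Icc (0 : ℝ) 1, ((1 - t) • P + t • x) ∈ U)
    (u : Fin (p + 1) → Fin m → ℝ) {x : Fin m → ℝ} (hx : x ∈ U) :
    ContinuousOn (fun t : ℝ => α ((1 - t) • P + t • x) u) (Set.Icc 0 1) := by
  have hγ : Continuous (fun t : ℝ => (1 - t) • P + t • x) := by fun_prop
  exact (hsmooth u).continuousOn.comp hγ.continuousOn (fun t ht => hstar x hx t ht)

theorem DW_contOn_t (hU : IsOpen U)
    (hsmooth : ∀ v : Fin (p + 1) → (Fin m → ℝ), ContDiffOn ℝ (⊤ : ℕ∞) (fun x => α x v) U)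
    (hstar : ∀ x ∈ U, ∀ t ∈ Set.Icc (0 : ℝ) 1, ((1 - t) • P + t • x) ∈ U)
    (w : Fin p → Fin m → ℝ) {x : Fin m → ℝ} (hx : x ∈ U) :
    ContinuousOn (fun t : ℝ => DW α P w x t) (Set.Icc 0 1) := by
  have h := (DW_contOn hU hsmooth w (P := P)).comp
    (f := fun t : ℝ => ((x, t) : (Fin m → ℝ) × ℝ))
    (continuous_const.prodMk continuous_id).continuousOn
    (fun t ht => hstar x hx t ht)
  exact h

theorem hasFDerivAt_integral (hU : IsOpen U)
    (hstar : ∀ x ∈ U, ∀ t ∈ Set.Icc (0 : ℝ) 1, ((1 - t) • P + t • x) ∈ U)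
    (hsmooth : ∀ v : Fin (p + 1) → (Fin m → ℝ), ContDiffOn ℝ (⊤ : ℕ∞) (fun x => α x v) U)
    (w : Fin p → Fin m → ℝ) {x₀ : Fin m → ℝ} (hx₀ : x₀ ∈ U) :
    HasFDerivAt
      (fun x => ∫ t in (0:ℝ)..1, t ^ p * α ((1 - t) • P + t • x) (Fin.cons (x - P) w))
      (∫ t in (0:ℝ)..1, t ^ p • DW α P w x₀ t) x₀ := by
  obtain ⟨ε, hε, hball⟩ := Metric.isOpen_iff.1 hU x₀ hx₀
  have hball2 : Metric.closedBall x₀ (ε/2) ⊆ U := fun z hz =>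
    hball (mem_ball.2 (lt_of_le_of_lt (mem_closedBall.1 hz) (by linarith)))
  have hball3 : Metric.ball x₀ (ε/2) ⊆ U := fun z hz =>
    hball2 (mem_closedBall.2 (le_of_lt (mem_ball.1 hz)))
  have hIoc : Set.uIoc (0:ℝ) 1 = Set.Ioc 0 1 := Set.uIoc_of_le zero_le_one
  obtain ⟨C, hC⟩ : ∃ C, ∀ q ∈ (Metric.closedBall x₀ (ε/2) ×ˢ Set.Icc (0:ℝ) 1),
      ‖DW α P w q.1 q.2‖ ≤ C := by
    apply IsCompact.exists_bound_of_continuousOn ((isCompact_closedBall _ _).prod isCompact_Icc)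
    exact (DW_contOn hU hsmooth w).mono (fun q hq => hstar _ (hball2 hq.1) _ hq.2)
  have hC0 : 0 ≤ C := le_trans (norm_nonneg _)
    (hC (x₀, 0) ⟨mem_closedBall_self (by linarith), Set.left_mem_Icc.2 zero_le_one⟩)
  apply intervalIntegral.hasFDerivAt_integral_of_dominated_of_fderiv_le
    (F' := fun x t => t ^ p • DW α P w x t) (bound := fun _ => C) (s := Metric.ball x₀ (ε/2)) (Metric.ball_mem_nhds _ (by linarith))
  · filter_upwards [hU.mem_nhds hx₀] with x hx
    refine ContinuousOn.aestronglyMeasurable ?_ measurableSet_uIoc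
    refine ContinuousOn.mono ?_ (hIoc ▸ Set.Ioc_subset_Icc_self)
    exact (continuous_pow p).continuousOn.mul (contOn_t hsmooth hstar _ hx)
  · apply ContinuousOn.intervalIntegrable
    refine ContinuousOn.mono ?_ (by rw [Set.uIcc_of_le zero_le_one])
    exact (continuous_pow p).continuousOn.mul (contOn_t hsmooth hstar _ hx₀)
  · refine ContinuousOn.aestronglyMeasurable ?_ measurableSet_uIoc
    refine ContinuousOn.mono ?_ (hIoc ▸ Set.Ioc_subset_Icc_self)
    exact (continuous_pow p).continuousOn.smul (DW_contOn_t hU hsmooth hstar w hx₀)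
  · refine MeasureTheory.ae_of_all _ fun t ht x hx => ?_
    rw [hIoc] at ht
    have ht' : t ∈ Set.Icc (0:ℝ) 1 := ⟨ht.1.le, ht.2⟩
    rw [norm_smul (t ^ p) (DW α P w x t)]
    have h1 : ‖t ^ p‖ ≤ 1 := by
      rw [Real.norm_eq_abs, abs_pow]
      exact pow_le_one₀ (abs_nonneg t) (abs_le.2 ⟨by linarith [ht'.1], ht'.2⟩)
    calc ‖t ^ p‖ * ‖DW α P w x t‖ ≤ 1 * C := by
          refine mul_le_mul h1 (hC (x, t)
            ⟨mem_closedBall.2 (le_of_lt (mem_ball.1 hx)), ht'⟩) (norm_nonneg _) zero_le_one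
      _ = C := one_mul C
  · exact intervalIntegrable_const
  · refine MeasureTheory.ae_of_all _ fun t ht x hx => ?_
    rw [hIoc] at ht
    have hy : ((1 - t) • P + t • x) ∈ U := hstar x (hball3 hx) t ⟨ht.1.le, ht.2⟩
    exact (hasFDerivAt_DW hU hsmooth w x t hy).const_mul (t ^ p)

theorem ftc (hU : IsOpen U)
    (hstar : ∀ x ∈ U, ∀ t ∈ Set.Icc (0 : ℝ) 1, ((1 - t) • P + t • x) ∈ U)
    (hsmooth : ∀ v : Fin (p + 1) → (Fin m → ℝ), ContDiffOn ℝ (⊤ : ℕ∞) (fun x => α x v) U)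
    {x₀ : Fin m → ℝ} (hx₀ : x₀ ∈ U) (v : Fin (p + 1) → Fin m → ℝ) :
    ∫ t in (0:ℝ)..1, ((↑(p + 1) * t ^ p) * α ((1 - t) • P + t • x₀) v
        + t ^ (p + 1) * fderiv ℝ (fun z => α z v) ((1 - t) • P + t • x₀) (x₀ - P))
      = α x₀ v := by
  have hIcc : Set.uIcc (0:ℝ) 1 = Set.Icc 0 1 := Set.uIcc_of_le zero_le_one
  have hγc : Continuous (fun t : ℝ => (1 - t) • P + t • x₀) := by fun_prop
  have key : ∀ t ∈ Set.uIcc (0:ℝ) 1,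
      HasDerivAt (fun t : ℝ => t ^ (p + 1) * α ((1 - t) • P + t • x₀) v)
        ((↑(p + 1) * t ^ p) * α ((1 - t) • P + t • x₀) v
          + t ^ (p + 1) * fderiv ℝ (fun z => α z v) ((1 - t) • P + t • x₀) (x₀ - P)) t := by
    intro t ht
    rw [hIcc] at ht
    have hy : ((1 - t) • P + t • x₀) ∈ U := hstar x₀ hx₀ t ht
    have h1 : HasDerivAt (fun t : ℝ => t ^ (p + 1)) (↑(p + 1) * t ^ p) t := by
      simpa using hasDerivAt_pow (p + 1) t
    have hγd : HasDerivAt (fun t : ℝ => (1 - t) • P + t • x₀) (x₀ - P) t := by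
      have ha : HasDerivAt (fun t : ℝ => (1 - t)) (-1 : ℝ) t := by
        simpa using (hasDerivAt_id t).const_sub (1:ℝ)
      have hb := (ha.smul_const P).add ((hasDerivAt_id t).smul_const x₀)
      have heq : (-1 : ℝ) • P + (1:ℝ) • x₀ = x₀ - P := by
        simp [neg_smul, one_smul, sub_eq_add_neg, add_comm]
      rwa [heq] at hb
    have hα : HasFDerivAt (fun z => α z v)
        (fderiv ℝ (fun z => α z v) ((1 - t) • P + t • x₀)) ((1 - t) • P + t • x₀) :=
      (((hsmooth v).contDiffAt (hU.mem_nhds hy)).differentiableAt (by simp)).hasFDerivAt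
    have h2 : HasDerivAt (fun t : ℝ => α ((1 - t) • P + t • x₀) v)
        (fderiv ℝ (fun z => α z v) ((1 - t) • P + t • x₀) (x₀ - P)) t :=
      by have := hα.comp_hasDerivAt t hγd; exact this
    exact h1.mul h2
  have hint : IntervalIntegrable
      (fun t : ℝ => (↑(p + 1) * t ^ p) * α ((1 - t) • P + t • x₀) v
        + t ^ (p + 1) * fderiv ℝ (fun z => α z v) ((1 - t) • P + t • x₀) (x₀ - P))
      MeasureTheory.volume 0 1 := by
    apply ContinuousOn.intervalIntegrable
    rw [hIcc]
    refine ContinuousOn.add ?_ ?_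
    · exact ((continuous_const.mul (continuous_pow p)).continuousOn).mul
        (contOn_t hsmooth hstar v hx₀)
    · refine ((continuous_pow (p + 1)).continuousOn).mul ?_
      refine ContinuousOn.clm_apply ?_ continuousOn_const
      exact ((hsmooth v).continuousOn_fderiv_of_isOpen hU (by simp)).comp hγc.continuousOn
        (fun t ht => hstar x₀ hx₀ t ht)
  rw [intervalIntegral.integral_eq_sub_of_hasDerivAt key hint]
  norm_num

end PoincareStarAux

open PoincareStarAux Metric MeasureTheory in
/-- Poincaré lemma via star-shaped integration: if `α` is a closed smooth `p`-form
(`p ≥ 1`) on an open set `U ⊆ ℝ^m` which is star-shaped with respect to `P ∈ U`, then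
`d(I_P(α)) = α` on `U`. -/
theorem extDer_starInt_of_closed (m p : ℕ) (U : Set (Fin m → ℝ)) (hU : IsOpen U)
    (P : Fin m → ℝ) (hP : P ∈ U)
    (hstar : ∀ x ∈ U, ∀ t ∈ Set.Icc (0 : ℝ) 1, ((1 - t) • P + t • x) ∈ U)
    (α : (Fin m → ℝ) → (Fin m → ℝ) [⋀^Fin (p + 1)]→ₗ[ℝ] ℝ)
    (hsmooth : ∀ v : Fin (p + 1) → (Fin m → ℝ), ContDiffOn ℝ (⊤ : ℕ∞) (fun x => α x v) U)
    (hclosed : ∀ x ∈ U, ∀ v : Fin (p + 2) → (Fin m → ℝ),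
      extDerRaw (fun y w => α y w) x v = 0) :
    ∀ x ∈ U, ∀ v : Fin (p + 1) → (Fin m → ℝ),
      extDerRaw (fun y w => starIntRaw P (fun z u => α z u) y w) x v = α x v := by
  intro x₀ hx₀ v
  have hfd : ∀ j : Fin (p + 1),
      fderiv ℝ (fun y => starIntRaw P (fun z u => α z u) y (v ∘ j.succAbove)) x₀
        = ∫ t in (0:ℝ)..1, t ^ p • DW α P (v ∘ j.succAbove) x₀ t := by
    intro j
    have h := hasFDerivAt_integral hU hstar hsmooth (v ∘ j.succAbove) hx₀
    have heq : (fun y => starIntRaw P (fun z u => α z u) y (v ∘ j.succAbove))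
        = fun x => ∫ t in (0:ℝ)..1,
            t ^ p * α ((1 - t) • P + t • x) (Fin.cons (x - P) (v ∘ j.succAbove)) := by
      funext x
      unfold starIntRaw
      simp only [cons_smul]
    rw [heq]
    exact h.fderiv
  unfold extDerRaw
  simp only []
  simp only [hfd]
  have hii : ∀ (w : Fin p → Fin m → ℝ),
      IntervalIntegrable (fun t => t ^ p • DW α P w x₀ t) volume 0 1 := by
    intro w
    apply ContinuousOn.intervalIntegrable
    refine ContinuousOn.mono ?_ (by rw [Set.uIcc_of_le zero_le_one])
    exact (continuous_pow p).continuousOn.smul (DW_contOn_t hU hsmooth hstar w hx₀)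
  have happly : ∀ j : Fin (p + 1),
      (∫ t in (0:ℝ)..1, t ^ p • DW α P (v ∘ j.succAbove) x₀ t) (v j)
        = ∫ t in (0:ℝ)..1, (t ^ p • DW α P (v ∘ j.succAbove) x₀ t) (v j) :=
    fun j => ContinuousLinearMap.intervalIntegral_apply (hii _) (v j)
  simp only [happly]
  simp only [← intervalIntegral.integral_const_mul]
  rw [← intervalIntegral.integral_finset_sum]
  · have hEq : Set.EqOn
        (fun t => ∑ j : Fin (p + 1),
          (-1:ℝ) ^ (j:ℕ) * ((t ^ p • DW α P (v ∘ j.succAbove) x₀ t) (v j)))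
        (fun t => (↑(p + 1) * t ^ p) * α ((1 - t) • P + t • x₀) v
          + t ^ (p + 1) * fderiv ℝ (fun z => α z v) ((1 - t) • P + t • x₀) (x₀ - P))
        (Set.uIcc (0:ℝ) 1) := by
      intro t ht
      rw [Set.uIcc_of_le zero_le_one] at ht
      have hy : ((1 - t) • P + t • x₀) ∈ U := hstar x₀ hx₀ t ht
      have happ : ∀ j : Fin (p + 1),
          (t ^ p • DW α P (v ∘ j.succAbove) x₀ t) (v j)
            = t ^ p * (α ((1 - t) • P + t • x₀) (Fin.cons (v j) (v ∘ j.succAbove))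
              + t * fderiv ℝ (fun z => α z (Fin.cons (x₀ - P) (v ∘ j.succAbove)))
                  ((1 - t) • P + t • x₀) (v j)) := by
        intro j
        rw [ContinuousLinearMap.smul_apply, DW_apply hU hsmooth _ _ _ _ hy, smul_eq_mul]
      have hcl := hclosed ((1 - t) • P + t • x₀) hy (Fin.cons (x₀ - P) v)
      unfold extDerRaw at hcl
      rw [Fin.sum_univ_succ] at hcl
      have e0 : ((Fin.cons (x₀ - P) v : Fin (p+2) → Fin m → ℝ) ∘ (0 : Fin (p+2)).succAbove) = v := by
        funext i; simp [Fin.succAbove_zero]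
      have ej : ∀ j : Fin (p + 1),
          ((Fin.cons (x₀ - P) v : Fin (p+2) → Fin m → ℝ) ∘ (Fin.succ j).succAbove)
            = Fin.cons (x₀ - P) (v ∘ j.succAbove) := by
        intro j; funext i
        refine Fin.cases ?_ (fun i => ?_) i
        · simp
        · simp [Fin.succ_succAbove_succ]
      simp only [e0, ej, Fin.cons_zero, Fin.cons_succ, Fin.val_succ, Fin.val_zero,
        pow_zero, one_mul, pow_succ] at hcl
      have hD : fderiv ℝ (fun z => α z v) ((1 - t) • P + t • x₀) (x₀ - P)
          = ∑ j : Fin (p + 1), (-1:ℝ) ^ (j:ℕ) *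
              fderiv ℝ (fun z => α z (Fin.cons (x₀ - P) (v ∘ j.succAbove)))
                ((1 - t) • P + t • x₀) (v j) := by
        have h2 : ∑ j : Fin (p + 1), ((-1:ℝ) ^ (j:ℕ) * (-1)) *
              fderiv ℝ (fun z => α z (Fin.cons (x₀ - P) (v ∘ j.succAbove)))
                ((1 - t) • P + t • x₀) (v j)
            = -∑ j : Fin (p + 1), (-1:ℝ) ^ (j:ℕ) *
              fderiv ℝ (fun z => α z (Fin.cons (x₀ - P) (v ∘ j.succAbove)))
                ((1 - t) • P + t • x₀) (v j) := by
          rw [← Finset.sum_neg_distrib]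
          exact Finset.sum_congr rfl fun j _ => by ring
        rw [h2] at hcl
        linarith
      simp only [happ, cons_cycle]
      calc ∑ j : Fin (p + 1), (-1:ℝ) ^ (j:ℕ) *
            (t ^ p * ((-1:ℝ) ^ (j:ℕ) * α ((1 - t) • P + t • x₀) v
              + t * fderiv ℝ (fun z => α z (Fin.cons (x₀ - P) (v ∘ j.succAbove)))
                  ((1 - t) • P + t • x₀) (v j)))
          = ∑ j : Fin (p + 1), (t ^ p * α ((1 - t) • P + t • x₀) v
              + t ^ (p + 1) * ((-1:ℝ) ^ (j:ℕ) *
                fderiv ℝ (fun z => α z (Fin.cons (x₀ - P) (v ∘ j.succAbove)))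
                  ((1 - t) • P + t • x₀) (v j))) := by
            refine Finset.sum_congr rfl fun j _ => ?_
            have h1 : (-1:ℝ) ^ (j:ℕ) * (-1:ℝ) ^ (j:ℕ) = 1 := by
              rw [← pow_add]
              exact Even.neg_one_pow ⟨(j:ℕ), rfl⟩
            linear_combination (t ^ p * α ((1 - t) • P + t • x₀) v) * h1
        _ = (↑(p + 1) * t ^ p) * α ((1 - t) • P + t • x₀) v
              + t ^ (p + 1) * fderiv ℝ (fun z => α z v) ((1 - t) • P + t • x₀) (x₀ - P) := by
            rw [Finset.sum_add_distrib, Finset.sum_const, ← Finset.mul_sum, ← hD,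
              Finset.card_univ, Fintype.card_fin, nsmul_eq_mul]
            push_cast
            ring
    rw [intervalIntegral.integral_congr hEq, ftc hU hstar hsmooth hx₀ v]
  · intro j _
    apply ContinuousOn.intervalIntegrable
    refine ContinuousOn.mono ?_ (by rw [Set.uIcc_of_le zero_le_one])
    exact continuousOn_const.mul
      (((continuous_pow p).continuousOn.smul (DW_contOn_t hU hsmooth hstar _ hx₀)).clm_apply
        continuousOn_const)
end
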